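/- arXiv:1307.3695 — 5 statements merged into one kernel-verified Lean document; each statement's English description precedes it below -/
import Mathlib

section
/- Let k < 0 and f ∈ L¹(0,1), and let x(t) = t^{-k}·(x(1) - ∫_t^1 s^k f(s) ds) be a solution of x' = -(k/t)x + f on (0,1]. Then ∫_0^1 |x'(s)| ds + |x(1)| ≤ 2(|x(1)| + ∫_0^1 |f(s)| ds); in particular x' ∈ L¹(0,1) and x extends to an absolutely continuous function on [0,1]. -/
/-!
Write `p = -k > 0`. The closed form of `x` turns the equation into
`x' u = p u^(p-1) (c - ∫_u^1 s^(-p) f s ds) + f u`, and the only delicate term is handled by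
Fubini on the triangle `{u < s}`: as `∫_0^s p u^(p-1) du = s^p`, for integrable `g`
`∫_0^t p u^(p-1) ∫_u^1 s^(-p) g s ds du = ∫_0^t g + t^p ∫_t^1 s^(-p) g`.
With `g = |f|`, `t = 1` this bounds `∫_0^1 |x'|` by `|c| + 2 ∫_0^1 |f|`; with `g = f` it gives
`∫_0^t x' = x t`, so `t ↦ ∫_0^t x'` is the absolutely continuous extension of `x`.
-/

open MeasureTheory Set Filter Topology

theorem integrable_and_integral_mul_setIntegral_Ioi_swap {μ ν : Measure ℝ} [SFinite μ] [SFinite ν]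
    {w h : ℝ → ℝ} (hw : Integrable w μ) (hh : AEStronglyMeasurable h ν)
    (hwh : Integrable (fun s => ‖h s‖ * ∫ u in Iio s, ‖w u‖ ∂μ) ν) :
    Integrable (fun u => w u * ∫ s in Ioi u, h s ∂ν) μ ∧
      ∫ u, w u * ∫ s in Ioi u, h s ∂ν ∂μ = ∫ s, h s * ∫ u in Iio s, w u ∂μ ∂ν := by
  set F : ℝ → ℝ → ℝ := fun u s => w u * (Ioi u).indicator h s
  have hF_swap : ∀ u s, F u s = h s * (Iio s).indicator w u := by
    intro u s
    by_cases hus : u < s <;> simp [F, indicator_apply, hus, mul_comm]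
  have hF_meas : AEStronglyMeasurable (Function.uncurry F) (μ.prod ν) := by
    have : Function.uncurry F
        = fun q : ℝ × ℝ => w q.1 * {q : ℝ × ℝ | q.1 < q.2}.indicator (fun q => h q.2) q := by
      ext ⟨u, s⟩; simp [F, indicator_apply]
    rw [this]
    exact hw.aestronglyMeasurable.comp_fst.mul
      (hh.comp_snd.indicator (measurableSet_lt measurable_fst measurable_snd))
  have hF_int : Integrable (Function.uncurry F) (μ.prod ν) := by
    refine (integrable_prod_iff' hF_meas).2 ⟨.of_forall fun s => ?_, ?_⟩
    · simp only [Function.uncurry_apply_pair, hF_swap]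
      exact ((hw.indicator measurableSet_Iio).const_mul (h s))
    · refine hwh.congr (.of_forall fun s => ?_)
      simp only [Function.uncurry_apply_pair, hF_swap, norm_mul, integral_const_mul,
        norm_indicator_eq_indicator_norm, integral_indicator measurableSet_Iio]
  have hF_fst : ∀ u, ∫ s, F u s ∂ν = w u * ∫ s in Ioi u, h s ∂ν := fun u => by
    rw [integral_const_mul, integral_indicator measurableSet_Ioi]
  have hF_snd : ∀ s, ∫ u, F u s ∂μ = h s * ∫ u in Iio s, w u ∂μ := fun s => by
    simp only [hF_swap, integral_const_mul, integral_indicator measurableSet_Iio]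
  refine ⟨?_, ?_⟩
  · simpa only [Function.uncurry_apply_pair, hF_fst] using hF_int.integral_prod_left
  · simpa only [hF_fst, hF_snd] using integral_integral_swap hF_int

section Weight

variable {k : ℝ}

theorem neg_div_mul_rpow_neg {u : ℝ} (hu : 0 < u) (y : ℝ) :
    -(k / u) * (u ^ (-k) * y) = -k * u ^ (-k - 1) * y := by
  rw [Real.rpow_sub hu, Real.rpow_one]
  field_simp

theorem integrableOn_neg_mul_rpow_sub_one (hk : k < 0) {a : ℝ} (ha : 0 ≤ a) :
    IntegrableOn (fun u : ℝ => -k * u ^ (-k - 1)) (Ioc 0 a) := by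
  have h : IntervalIntegrable (fun u : ℝ => u ^ (-k - 1)) volume 0 a :=
    intervalIntegral.intervalIntegrable_rpow' (by linarith)
  exact ((intervalIntegrable_iff_integrableOn_Ioc_of_le ha).1 h).const_mul _

theorem integral_Ioc_neg_mul_rpow_sub_one (hk : k < 0) {a : ℝ} (ha : 0 ≤ a) :
    ∫ u in Ioc 0 a, -k * u ^ (-k - 1) = a ^ (-k) := by
  rw [← intervalIntegral.integral_of_le ha, intervalIntegral.integral_const_mul,
    integral_rpow (Or.inl (by linarith)), sub_add_cancel, Real.zero_rpow (by linarith)]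
  field_simp [hk.ne]
  ring

theorem setIntegral_Iio_neg_mul_rpow_sub_one (hk : k < 0) {s t : ℝ} (hs : 0 ≤ s) (ht : 0 ≤ t) :
    ∫ u in Iio s, -k * u ^ (-k - 1) ∂(volume.restrict (Ioc 0 t)) = (min s t) ^ (-k) := by
  have hset : (Iio s ∩ Ioc 0 t : Set ℝ) =ᵐ[volume] Ioc 0 (min s t) := by
    have h₁ : Iio s ∩ Ioc 0 t = Ioo 0 s ∩ Ioc 0 t := by
      ext u; simp only [mem_inter_iff, mem_Iio, mem_Ioc, mem_Ioo]; tauto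
    rw [h₁, ← max_self (0:ℝ), ← Ioc_inter_Ioc, max_self]
    exact Ioo_ae_eq_Ioc.inter (ae_eq_refl _)
  rw [Measure.restrict_restrict measurableSet_Iio, setIntegral_congr_set hset,
    integral_Ioc_neg_mul_rpow_sub_one hk (le_min hs ht)]

theorem rpow_mul_min_rpow_neg_le_one (hk : k ≤ 0) {s t : ℝ} (hs : 0 < s) (ht : 0 ≤ t) :
    s ^ k * (min s t) ^ (-k) ≤ 1 :=
  calc s ^ k * (min s t) ^ (-k) ≤ s ^ k * s ^ (-k) := by
        gcongr
        · linarith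
        · exact min_le_left s t
    _ = 1 := by rw [← Real.rpow_add hs, add_neg_cancel, Real.rpow_zero]

variable {g : ℝ → ℝ} {t : ℝ}

theorem integrableOn_rpow_mul_mul_min_rpow_neg (hk : k ≤ 0) (hg : IntegrableOn g (Ioc 0 1))
    (ht : 0 ≤ t) : IntegrableOn (fun s => s ^ k * g s * (min s t) ^ (-k)) (Ioc 0 1) := by
  have hbdd : IntegrableOn (fun s => (s ^ k * (min s t) ^ (-k)) * g s) (Ioc 0 1) := by
    refine hg.bdd_mul (c := 1) (by fun_prop) ?_
    filter_upwards [ae_restrict_mem measurableSet_Ioc] with s hs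
    rw [Real.norm_of_nonneg (mul_nonneg (Real.rpow_nonneg hs.1.le _)
      (Real.rpow_nonneg (le_min hs.1.le ht) _))]
    exact rpow_mul_min_rpow_neg_le_one hk hs.1 ht
  exact hbdd.congr_fun (fun s _ => by ring) measurableSet_Ioc

theorem integral_rpow_mul_mul_min_rpow_neg (hk : k ≤ 0) (hg : IntegrableOn g (Ioc 0 1))
    (ht₀ : 0 ≤ t) (ht₁ : t ≤ 1) :
    ∫ s in Ioc 0 1, s ^ k * g s * (min s t) ^ (-k)
      = (∫ s in Ioc 0 t, g s) + t ^ (-k) * ∫ s in Ioc t 1, s ^ k * g s := by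
  have hint := integrableOn_rpow_mul_mul_min_rpow_neg hk hg ht₀
  have hleft : ∫ s in Ioc 0 t, s ^ k * g s * (min s t) ^ (-k) = ∫ s in Ioc 0 t, g s := by
    refine setIntegral_congr_fun measurableSet_Ioc fun s hs => ?_
    rw [min_eq_left hs.2, mul_right_comm, ← Real.rpow_add hs.1, add_neg_cancel, Real.rpow_zero,
      one_mul]
  have hright : ∫ s in Ioc t 1, s ^ k * g s * (min s t) ^ (-k)
      = t ^ (-k) * ∫ s in Ioc t 1, s ^ k * g s := by
    rw [← integral_const_mul]
    refine setIntegral_congr_fun measurableSet_Ioc fun s hs => ?_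
    rw [min_eq_right hs.1.le, mul_comm]
  rw [← Ioc_union_Ioc_eq_Ioc ht₀ ht₁, setIntegral_union (Ioc_disjoint_Ioc_of_le le_rfl)
    measurableSet_Ioc (hint.mono_set (Ioc_subset_Ioc le_rfl ht₁))
    (hint.mono_set (Ioc_subset_Ioc ht₀ le_rfl)), hleft, hright]

theorem integrableOn_and_integral_neg_mul_rpow_sub_one_mul_tail (hk : k < 0)
    (hg : IntegrableOn g (Ioc 0 1)) (ht₀ : 0 ≤ t) (ht₁ : t ≤ 1) :
    IntegrableOn (fun u => -k * u ^ (-k - 1) * ∫ s in Ioc u 1, s ^ k * g s) (Ioc 0 t) ∧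
      ∫ u in Ioc 0 t, -k * u ^ (-k - 1) * ∫ s in Ioc u 1, s ^ k * g s
        = (∫ s in Ioc 0 t, g s) + t ^ (-k) * ∫ s in Ioc t 1, s ^ k * g s := by
  set w : ℝ → ℝ := fun u => -k * u ^ (-k - 1)
  set h : ℝ → ℝ := fun s => s ^ k * g s
  have hW : ∀ s, 0 ≤ s → ∫ u in Iio s, ‖w u‖ ∂(volume.restrict (Ioc 0 t)) = (min s t) ^ (-k) := by
    intro s hs
    rw [← setIntegral_Iio_neg_mul_rpow_sub_one hk hs ht₀]
    refine integral_congr_ae (ae_restrict_of_ae ?_)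
    filter_upwards [ae_restrict_mem measurableSet_Ioc] with u hu
    exact Real.norm_of_nonneg (mul_nonneg (by linarith) (Real.rpow_nonneg hu.1.le _))
  have htail : ∀ u, 0 ≤ u →
      ∫ s in Ioi u, h s ∂(volume.restrict (Ioc 0 1)) = ∫ s in Ioc u 1, h s := fun u hu => by
    rw [Measure.restrict_restrict measurableSet_Ioi, inter_comm, Ioc_inter_Ioi, max_eq_right hu]
  have hmin := integrableOn_rpow_mul_mul_min_rpow_neg hk.le hg ht₀
  obtain ⟨hint, hswap⟩ := integrable_and_integral_mul_setIntegral_Ioi_swap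
    (μ := volume.restrict (Ioc 0 t)) (ν := volume.restrict (Ioc 0 1)) (w := w) (h := h)
    (integrableOn_neg_mul_rpow_sub_one hk ht₀)
    ((by fun_prop : Measurable fun s : ℝ => s ^ k).aestronglyMeasurable.mul hg.aestronglyMeasurable)
    (hmin.norm.congr <| by
      filter_upwards [ae_restrict_mem measurableSet_Ioc] with s hs
      rw [hW s hs.1.le, norm_mul, Real.norm_of_nonneg (Real.rpow_nonneg (le_min hs.1.le ht₀) _)])
  refine ⟨hint.congr ?_, ?_⟩
  · filter_upwards [ae_restrict_mem measurableSet_Ioc] with u hu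
    rw [htail u hu.1.le]
  · calc ∫ u in Ioc 0 t, w u * ∫ s in Ioc u 1, h s
        = ∫ u in Ioc 0 t, w u * ∫ s in Ioi u, h s ∂(volume.restrict (Ioc 0 1)) :=
          setIntegral_congr_fun measurableSet_Ioc fun u hu => by rw [htail u hu.1.le]
      _ = ∫ s in Ioc 0 1, h s * ∫ u in Iio s, w u ∂(volume.restrict (Ioc 0 t)) := hswap
      _ = ∫ s in Ioc 0 1, h s * (min s t) ^ (-k) :=
          setIntegral_congr_fun measurableSet_Ioc fun s hs => by
            rw [setIntegral_Iio_neg_mul_rpow_sub_one hk hs.1.le ht₀]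
      _ = _ := integral_rpow_mul_mul_min_rpow_neg hk.le hg ht₀ ht₁

end Weight

/-- `-(k/u) x(u) + f(u)` for the closed form `x(u) = u^(-k) (c - ∫_u^1 s^k f(s) ds)`. -/
noncomputable def solutionDeriv (k c : ℝ) (f : ℝ → ℝ) (u : ℝ) : ℝ :=
  -k * u ^ (-k - 1) * (c - ∫ s in Ioc u 1, s ^ k * f s) + f u

section SolutionDeriv

variable {k : ℝ} (c : ℝ) {f : ℝ → ℝ}

theorem integrableOn_solutionDeriv (hk : k < 0) (hf : IntegrableOn f (Ioc 0 1)) :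
    IntegrableOn (solutionDeriv k c f) (Ioc 0 1) := by
  have hw := integrableOn_neg_mul_rpow_sub_one hk zero_le_one
  have hwT := (integrableOn_and_integral_neg_mul_rpow_sub_one_mul_tail hk hf zero_le_one le_rfl).1
  refine IntegrableOn.congr_fun (((hw.mul_const c).sub' hwT).fun_add hf) (fun u _ => ?_)
    measurableSet_Ioc
  simp only [solutionDeriv]
  ring

theorem setIntegral_solutionDeriv (hk : k < 0) (hf : IntegrableOn f (Ioc 0 1)) {t : ℝ}
    (ht : t ∈ Ioc (0:ℝ) 1) :
    ∫ u in Ioc 0 t, solutionDeriv k c f u = t ^ (-k) * (c - ∫ s in Ioc t 1, s ^ k * f s) := by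
  have hw := integrableOn_neg_mul_rpow_sub_one hk ht.1.le
  obtain ⟨hwT, hwT_eq⟩ := integrableOn_and_integral_neg_mul_rpow_sub_one_mul_tail hk hf ht.1.le ht.2
  have hf_t : IntegrableOn f (Ioc 0 t) := hf.mono_set (Ioc_subset_Ioc le_rfl ht.2)
  have hsplit : ∀ u, solutionDeriv k c f u
      = (-k * u ^ (-k - 1) * c - -k * u ^ (-k - 1) * ∫ s in Ioc u 1, s ^ k * f s) + f u :=
    fun u => by simp only [solutionDeriv]; ring
  simp only [hsplit]
  rw [integral_add ((hw.mul_const c).sub' hwT) hf_t, integral_sub (hw.mul_const c) hwT,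
    integral_mul_const, integral_Ioc_neg_mul_rpow_sub_one hk ht.1.le, hwT_eq]
  ring

theorem abs_solutionDeriv_le (hk : k < 0) {u : ℝ} (hu : 0 < u) :
    |solutionDeriv k c f u|
      ≤ -k * u ^ (-k - 1) * |c|
        + (-k * u ^ (-k - 1) * (∫ s in Ioc u 1, s ^ k * |f s|) + |f u|) := by
  have hw : 0 ≤ -k * u ^ (-k - 1) := mul_nonneg (by linarith) (Real.rpow_nonneg hu.le _)
  have htail : |∫ s in Ioc u 1, s ^ k * f s| ≤ ∫ s in Ioc u 1, s ^ k * |f s| :=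
    abs_integral_le_integral_abs.trans_eq <|
      setIntegral_congr_fun measurableSet_Ioc fun s hs => by
        rw [abs_mul, abs_of_nonneg (Real.rpow_nonneg (hu.trans hs.1).le _)]
  calc |solutionDeriv k c f u|
      ≤ |-k * u ^ (-k - 1) * (c - ∫ s in Ioc u 1, s ^ k * f s)| + |f u| := abs_add_le _ _
    _ = -k * u ^ (-k - 1) * |c - ∫ s in Ioc u 1, s ^ k * f s| + |f u| := by
        rw [abs_mul, abs_of_nonneg hw]
    _ ≤ -k * u ^ (-k - 1) * (|c| + ∫ s in Ioc u 1, s ^ k * |f s|) + |f u| := by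
        gcongr
        exact (abs_sub _ _).trans (by gcongr)
    _ = _ := by ring

theorem integral_abs_solutionDeriv_le (hk : k < 0) (hf : IntegrableOn f (Ioc 0 1)) :
    ∫ u in Ioc 0 1, |solutionDeriv k c f u| ≤ |c| + 2 * ∫ s in Ioc 0 1, |f s| := by
  have hw := integrableOn_neg_mul_rpow_sub_one hk zero_le_one
  obtain ⟨hwT, hwT_eq⟩ :=
    integrableOn_and_integral_neg_mul_rpow_sub_one_mul_tail hk hf.abs zero_le_one le_rfl
  calc ∫ u in Ioc 0 1, |solutionDeriv k c f u|
      ≤ ∫ u in Ioc 0 1, -k * u ^ (-k - 1) * |c|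
          + (-k * u ^ (-k - 1) * (∫ s in Ioc u 1, s ^ k * |f s|) + |f u|) :=
        setIntegral_mono_on (integrableOn_solutionDeriv c hk hf).abs
          ((hw.mul_const _).fun_add (hwT.fun_add hf.abs)) measurableSet_Ioc
          fun u hu => abs_solutionDeriv_le c hk hu.1
    _ = |c| + 2 * ∫ s in Ioc 0 1, |f s| := by
        rw [integral_add (hw.mul_const _) (hwT.fun_add hf.abs), integral_add hwT hf.abs, hwT_eq,
          integral_mul_const, integral_Ioc_neg_mul_rpow_sub_one hk zero_le_one]
        simp only [Real.one_rpow, Ioc_self, Measure.restrict_empty, integral_zero_measure]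
        ring

end SolutionDeriv

theorem stmt_1_general (k : ℝ) (hk : k < 0) (f x x' : ℝ → ℝ) (c : ℝ)
    (hf : IntegrableOn f (Ioc 0 1))
    (hx : ∀ t ∈ Ioc (0:ℝ) 1,
      x t = t ^ (-k) * (c - ∫ s in t..1, s ^ k * f s))
    (hx' : ∀ t ∈ Ioc (0:ℝ) 1, x' t = -(k / t) * x t + f t) :
    (∫ s in Ioc (0:ℝ) 1, |x' s|) + |c| ≤ 2 * (|c| + ∫ s in Ioc (0:ℝ) 1, |f s|) ∧
    IntegrableOn x' (Ioc 0 1) ∧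
    ∃ y : ℝ → ℝ, ContinuousOn y (Icc 0 1) ∧ (∀ t ∈ Ioc (0:ℝ) 1, y t = x t) ∧
      ∀ t ∈ Icc (0:ℝ) 1, y t = y 0 + ∫ s in (0:ℝ)..t, x' s := by
  have hx_Ioc : ∀ t ∈ Ioc (0:ℝ) 1, x t = t ^ (-k) * (c - ∫ s in Ioc t 1, s ^ k * f s) :=
    fun t ht => by rw [hx t ht, intervalIntegral.integral_of_le ht.2]
  have hx'_eq : EqOn x' (solutionDeriv k c f) (Ioc 0 1) := fun t ht => by
    rw [hx' t ht, hx_Ioc t ht, neg_div_mul_rpow_neg ht.1, solutionDeriv]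
  have hx'_int : IntegrableOn x' (Ioc 0 1) :=
    (integrableOn_solutionDeriv c hk hf).congr_fun hx'_eq.symm measurableSet_Ioc
  have hx'_abs : ∫ s in Ioc (0:ℝ) 1, |x' s| = ∫ s in Ioc (0:ℝ) 1, |solutionDeriv k c f s| :=
    setIntegral_congr_fun measurableSet_Ioc fun s hs => by rw [hx'_eq hs]
  refine ⟨by linarith [hx'_abs ▸ integral_abs_solutionDeriv_le c hk hf, abs_nonneg c], hx'_int,
    fun t => ∫ s in (0:ℝ)..t, x' s, ?_, fun t ht => ?_, fun t _ => by simp⟩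
  · simpa [uIcc_of_le zero_le_one] using intervalIntegral.continuousOn_primitive_interval
      (a := 0) (b := 1) (by simpa [uIcc_of_le zero_le_one, integrableOn_Icc_iff_integrableOn_Ioc])
  · show ∫ s in (0:ℝ)..t, x' s = x t
    rw [intervalIntegral.integral_of_le ht.1.le, hx_Ioc t ht,
      ← setIntegral_solutionDeriv c hk hf ht]
    exact setIntegral_congr_fun measurableSet_Ioc fun s hs =>
      hx'_eq (Ioc_subset_Ioc le_rfl ht.2 hs)

/-- For `k < 0`, every solution of the model singular equation satisfies the
AC-norm estimate `∫_0^1 |x'| + |x 1| ≤ 2 (|x 1| + ∫_0^1 |f|)`; in particular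
`x'` is integrable and `x` extends to an absolutely continuous function on `[0,1]`. -/
theorem stmt_1 (k : ℝ) (hk : k < 0) (f x x' : ℝ → ℝ) (c : ℝ)
    (hf : IntegrableOn f (Ioc 0 1))
    (hc : x 1 = c)
    (hx : ∀ t ∈ Ioc (0:ℝ) 1,
      x t = t ^ (-k) * (c - ∫ s in t..1, s ^ k * f s))
    (hx' : ∀ t ∈ Ioc (0:ℝ) 1, x' t = -(k / t) * x t + f t) :
    (∫ s in Ioc (0:ℝ) 1, |x' s|) + |c| ≤ 2 * (|c| + ∫ s in Ioc (0:ℝ) 1, |f s|) ∧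
    IntegrableOn x' (Ioc 0 1) ∧
    ∃ y : ℝ → ℝ, ContinuousOn y (Icc 0 1) ∧ (∀ t ∈ Ioc (0:ℝ) 1, y t = x t) ∧
      ∀ t ∈ Icc (0:ℝ) 1, y t = y 0 + ∫ s in (0:ℝ)..t, x' s :=
  stmt_1_general k hk f x x' c hf hx hx'
end

section
/- Let k > 0 and f ∈ L¹(0,1). The function x(t) = ∫_0^t (s/t)^k f(s) ds (extended by x(0)=0) satisfies x'(t) = -(k/t)x(t) + f(t) for almost every t ∈ (0,1] and x(0) = 0; moreover it is the unique solution of this Cauchy problem among functions x ∈ AC[0,1] with x(0) = 0 and ∫_0^1 |x(t)|/t dt < ∞. -/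
/-!
Write `x t = t ^ (-k) * ∫₀ᵗ u ^ k f u du`. Fubini over the triangle `0 < u ≤ σ ≤ T`, together with
`∫ᵤᵀ k σ ^ (-k-1) dσ = u ^ (-k) - T ^ (-k)`, turns `∫₀ᵀ (k/σ) x σ dσ` into
`∫₀ᵀ (1 - (u/T) ^ k) f u du = ∫₀ᵀ f - x T`. This shows at once that `(k/t) x` is integrable and
that `x` is the primitive of `-(k/t) x + f`.

The difference `z` of two solutions solves the homogeneous equation, so `t ^ k * z t` is absolutely
continuous on every `[ε, 1]` with vanishing derivative almost everywhere: `z t = C * t ^ (-k)`.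
As `t ^ (-k-1)` is not integrable at `0`, the condition `∫₀¹ |z t| / t dt < ∞` forces `C = 0`.
-/

open MeasureTheory Set Filter Topology

section PowerKernel

variable {k T : ℝ} {φ : ℝ → ℝ}

lemma integral_Icc_mul_rpow_neg_sub_one (hk : 0 < k) {u : ℝ} (hu : 0 < u) (huT : u ≤ T) :
    ∫ σ in Icc u T, k * σ ^ (-k - 1) = u ^ (-k) - T ^ (-k) := by
  have h0 : (0 : ℝ) ∉ uIcc u T := by
    rw [uIcc_of_le huT]
    exact fun h => hu.not_ge h.1
  rw [integral_const_mul, integral_Icc_eq_integral_Ioc, ← intervalIntegral.integral_of_le huT,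
    integral_rpow (Or.inr ⟨by linarith, h0⟩), sub_add_cancel]
  field_simp
  ring

lemma integrableOn_Icc_const_mul_rpow (c s : ℝ) {u : ℝ} (hu : 0 < u) :
    IntegrableOn (fun σ => c * σ ^ s) (Icc u T) :=
  (continuousOn_const.mul (continuousOn_id.rpow_const fun _ hσ =>
    Or.inl (hu.trans_le hσ.1).ne')).integrableOn_Icc

lemma integrableOn_rpow_mul (hk : 0 ≤ k) (hφ : IntegrableOn φ (Ioc 0 T)) :
    IntegrableOn (fun u => u ^ k * φ u) (Ioc 0 T) :=
  hφ.continuousOn_mul_of_subset (Real.continuous_rpow_const hk).continuousOn isCompact_Icc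
    measurableSet_Ioc Ioc_subset_Icc_self

/-- `∫₀ᵀ k σ^(-k-1) ∫₀^σ u^k φ(u) du dσ` as a double integral over the triangle `u ≤ σ`. -/
noncomputable def powerKernel (k : ℝ) (φ : ℝ → ℝ) (σ u : ℝ) : ℝ :=
  if u ≤ σ then k * σ ^ (-k - 1) * (u ^ k * φ u) else 0

lemma powerKernel_eq_indicator_Iic (σ u : ℝ) :
    powerKernel k φ σ u = (Iic σ).indicator (fun u => k * σ ^ (-k - 1) * (u ^ k * φ u)) u := by
  simp only [powerKernel, indicator_apply, mem_Iic]

lemma powerKernel_eq_indicator_Ici (σ u : ℝ) :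
    powerKernel k φ σ u = (Ici u).indicator (fun σ => k * σ ^ (-k - 1)) σ * (u ^ k * φ u) := by
  simp only [powerKernel, indicator_apply, mem_Ici, ite_mul, zero_mul]

lemma Ioc_inter_Ici_of_pos {u : ℝ} (hu : 0 < u) : Ioc 0 T ∩ Ici u = Icc u T := by
  ext σ
  simp only [mem_inter_iff, mem_Ioc, mem_Ici, mem_Icc]
  constructor
  · exact fun ⟨⟨_, hσT⟩, huσ⟩ => ⟨huσ, hσT⟩
  · exact fun ⟨huσ, hσT⟩ => ⟨⟨hu.trans_le huσ, hσT⟩, huσ⟩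

lemma norm_powerKernel (hk : 0 < k) {σ u : ℝ} (hu : 0 < u) :
    ‖powerKernel k φ σ u‖ = powerKernel k (fun u => |φ u|) σ u := by
  unfold powerKernel
  split_ifs with huσ
  · have hσ : 0 < σ := hu.trans_le huσ
    rw [Real.norm_eq_abs, abs_mul, abs_mul, abs_mul, abs_of_pos hk,
      abs_of_pos (Real.rpow_pos_of_pos hσ _), abs_of_pos (Real.rpow_pos_of_pos hu _)]
  · exact norm_zero

lemma setIntegral_powerKernel_snd {σ : ℝ} (hσ : σ ≤ T) :
    ∫ u in Ioc 0 T, powerKernel k φ σ u = k * σ ^ (-k - 1) * ∫ u in Ioc 0 σ, u ^ k * φ u := by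
  simp_rw [powerKernel_eq_indicator_Iic]
  rw [setIntegral_indicator measurableSet_Iic, Ioc_inter_Iic, inf_eq_right.mpr hσ,
    integral_const_mul]

lemma setIntegral_powerKernel_fst (hk : 0 < k) {u : ℝ} (hu : u ∈ Ioc 0 T) :
    ∫ σ in Ioc 0 T, powerKernel k φ σ u = φ u - T ^ (-k) * (u ^ k * φ u) := by
  simp_rw [powerKernel_eq_indicator_Ici]
  rw [integral_mul_const, setIntegral_indicator measurableSet_Ici, Ioc_inter_Ici_of_pos hu.1,
    integral_Icc_mul_rpow_neg_sub_one hk hu.1 hu.2, sub_mul, ← mul_assoc,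
    ← Real.rpow_add hu.1, neg_add_cancel, Real.rpow_zero, one_mul]

lemma integrable_powerKernel (hk : 0 < k) (hφ : IntegrableOn φ (Ioc 0 T)) :
    Integrable (Function.uncurry (powerKernel k φ))
      ((volume.restrict (Ioc 0 T)).prod (volume.restrict (Ioc 0 T))) := by
  have hK : Function.uncurry (powerKernel k φ) = {p : ℝ × ℝ | p.2 ≤ p.1}.indicator
      (fun p => k * p.1 ^ (-k - 1) * (p.2 ^ k * φ p.2)) := by
    ext ⟨σ, u⟩
    simp only [Function.uncurry_apply_pair, powerKernel, indicator_apply, mem_ofPred_eq]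
  have hmeas : AEStronglyMeasurable (Function.uncurry (powerKernel k φ))
      ((volume.restrict (Ioc 0 T)).prod (volume.restrict (Ioc 0 T))) := by
    rw [hK]
    refine AEStronglyMeasurable.indicator ?_ (measurableSet_le measurable_snd measurable_fst)
    refine (Measurable.aestronglyMeasurable (by fun_prop)).mul
      ((Measurable.aestronglyMeasurable (by fun_prop)).mul hφ.aestronglyMeasurable.comp_snd)
  refine (integrable_prod_iff' hmeas).mpr ⟨?_, ?_⟩
  · filter_upwards [ae_restrict_mem measurableSet_Ioc] with u hu
    simp_rw [Function.uncurry_apply_pair, powerKernel_eq_indicator_Ici]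
    refine Integrable.mul_const ?_ _
    rw [← IntegrableOn, integrableOn_indicator_iff measurableSet_Ici, inter_comm,
      Ioc_inter_Ici_of_pos hu.1]
    exact integrableOn_Icc_const_mul_rpow k _ hu.1
  · have hbound : IntegrableOn (fun u => |φ u| - T ^ (-k) * (u ^ k * |φ u|)) (Ioc 0 T) :=
      hφ.abs.sub ((integrableOn_rpow_mul hk.le hφ.abs).const_mul _)
    refine hbound.congr_fun (fun u hu => ?_) measurableSet_Ioc
    simp only [Function.uncurry_apply_pair, norm_powerKernel hk hu.1]
    exact (setIntegral_powerKernel_fst (φ := fun u => |φ u|) hk hu).symm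

theorem integrableOn_mul_rpow_mul_primitive (hk : 0 < k) (hφ : IntegrableOn φ (Ioc 0 T)) :
    IntegrableOn (fun σ => k * σ ^ (-k - 1) * ∫ u in Ioc 0 σ, u ^ k * φ u) (Ioc 0 T) :=
  IntegrableOn.congr_fun (integrable_powerKernel hk hφ).integral_prod_left
    (fun _ hσ => setIntegral_powerKernel_snd hσ.2) measurableSet_Ioc

theorem setIntegral_mul_rpow_mul_primitive (hk : 0 < k) (hφ : IntegrableOn φ (Ioc 0 T)) :
    ∫ σ in Ioc 0 T, k * σ ^ (-k - 1) * ∫ u in Ioc 0 σ, u ^ k * φ u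
      = (∫ u in Ioc 0 T, φ u) - T ^ (-k) * ∫ u in Ioc 0 T, u ^ k * φ u := by
  calc ∫ σ in Ioc 0 T, k * σ ^ (-k - 1) * ∫ u in Ioc 0 σ, u ^ k * φ u
      = ∫ σ in Ioc 0 T, ∫ u in Ioc 0 T, powerKernel k φ σ u :=
        setIntegral_congr_fun measurableSet_Ioc fun _ hσ => (setIntegral_powerKernel_snd hσ.2).symm
    _ = ∫ u in Ioc 0 T, ∫ σ in Ioc 0 T, powerKernel k φ σ u :=
        integral_integral_swap (integrable_powerKernel hk hφ)
    _ = ∫ u in Ioc 0 T, (φ u - T ^ (-k) * (u ^ k * φ u)) :=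
        setIntegral_congr_fun measurableSet_Ioc fun _ hu => setIntegral_powerKernel_fst hk hu
    _ = (∫ u in Ioc 0 T, φ u) - T ^ (-k) * ∫ u in Ioc 0 T, u ^ k * φ u := by
        rw [integral_sub hφ ((integrableOn_rpow_mul hk.le hφ).const_mul _), integral_const_mul]

end PowerKernel

lemma setIntegral_div_rpow_mul (k : ℝ) (f : ℝ → ℝ) {t : ℝ} (ht : 0 < t) :
    ∫ s in Ioc 0 t, (s / t) ^ k * f s = t ^ (-k) * ∫ s in Ioc 0 t, s ^ k * f s := by
  rw [← integral_const_mul]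
  refine setIntegral_congr_fun measurableSet_Ioc fun s hs => ?_
  rw [Real.div_rpow hs.1.le ht.le, Real.rpow_neg ht.le]
  ring

lemma div_mul_setIntegral_div_rpow_mul (k : ℝ) (f : ℝ → ℝ) {t : ℝ} (ht : 0 < t) :
    k / t * ∫ s in Ioc 0 t, (s / t) ^ k * f s
      = k * t ^ (-k - 1) * ∫ s in Ioc 0 t, s ^ k * f s := by
  rw [setIntegral_div_rpow_mul k f ht, ← mul_assoc, Real.rpow_sub_one ht.ne', div_mul_eq_mul_div,
    mul_div_assoc]

/-- Membership of `x` in `AC[0, b]` with `x 0 = 0` is encoded by `x` being the primitive of an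
integrable `g`, its almost-everywhere derivative. -/
def IsCauchySolution (k b : ℝ) (f x : ℝ → ℝ) : Prop :=
  ∃ g : ℝ → ℝ, IntegrableOn g (Ioc 0 b) ∧
    (∀ᵐ t ∂(volume.restrict (Ioc (0:ℝ) b)), g t = -(k / t) * x t + f t) ∧
    (∀ t ∈ Icc (0:ℝ) b, x t = ∫ s in Ioc (0:ℝ) t, g s)

section Existence

variable {k b : ℝ} {f x : ℝ → ℝ}

theorem integrableOn_div_mul_of_eq_setIntegral (hk : 0 < k) (hf : IntegrableOn f (Ioc 0 b))
    (hx : ∀ t ∈ Ioc 0 b, x t = ∫ s in Ioc 0 t, (s / t) ^ k * f s) :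
    IntegrableOn (fun t => k / t * x t) (Ioc 0 b) :=
  (integrableOn_mul_rpow_mul_primitive hk hf).congr_fun (fun t ht => by
    rw [hx t ht, div_mul_setIntegral_div_rpow_mul k f ht.1]) measurableSet_Ioc

theorem setIntegral_div_mul_of_eq_setIntegral (hk : 0 < k) (hf : IntegrableOn f (Ioc 0 b))
    (hx : ∀ t ∈ Ioc 0 b, x t = ∫ s in Ioc 0 t, (s / t) ^ k * f s) {T : ℝ} (hT : T ∈ Ioc 0 b) :
    ∫ t in Ioc 0 T, k / t * x t = (∫ t in Ioc 0 T, f t) - x T := by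
  have hxT : ∀ t ∈ Ioc 0 T, x t = ∫ s in Ioc 0 t, (s / t) ^ k * f s :=
    fun t ht => hx t ⟨ht.1, ht.2.trans hT.2⟩
  have hfT : IntegrableOn f (Ioc 0 T) := hf.mono_set (Ioc_subset_Ioc_right hT.2)
  rw [setIntegral_congr_fun measurableSet_Ioc fun t ht => by
      rw [hxT t ht, div_mul_setIntegral_div_rpow_mul k f ht.1],
    setIntegral_mul_rpow_mul_primitive hk hfT, hxT T ⟨hT.1, le_rfl⟩,
    setIntegral_div_rpow_mul k f hT.1]

theorem integrableOn_abs_div_of_eq_setIntegral (hk : 0 < k) (hf : IntegrableOn f (Ioc 0 b))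
    (hx : ∀ t ∈ Ioc 0 b, x t = ∫ s in Ioc 0 t, (s / t) ^ k * f s) :
    IntegrableOn (fun t => |x t| / t) (Ioc 0 b) :=
  IntegrableOn.congr_fun ((integrableOn_div_mul_of_eq_setIntegral hk hf hx).abs.const_mul k⁻¹)
    (fun t ht => by
      rw [abs_mul, abs_div, abs_of_pos hk, abs_of_pos ht.1]
      field_simp)
    measurableSet_Ioc

theorem isCauchySolution_of_eq_setIntegral (hk : 0 < k) (hf : IntegrableOn f (Ioc 0 b))
    (hx : ∀ t ∈ Ioc 0 b, x t = ∫ s in Ioc 0 t, (s / t) ^ k * f s) (hx0 : x 0 = 0) :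
    IsCauchySolution k b f x := by
  have hsing : IntegrableOn (fun t => -(k / t * x t)) (Ioc 0 b) :=
    (integrableOn_div_mul_of_eq_setIntegral hk hf hx).neg
  refine ⟨fun t => -(k / t * x t) + f t, hsing.add hf, ae_of_all _ fun _ => by ring,
    fun T hT => ?_⟩
  rcases hT.1.eq_or_lt with rfl | hT0
  · simp [hx0]
  have hTb : Ioc 0 T ⊆ Ioc 0 b := Ioc_subset_Ioc_right hT.2
  rw [integral_add (hsing.mono_set hTb) (hf.mono_set hTb), integral_neg,
    setIntegral_div_mul_of_eq_setIntegral hk hf hx ⟨hT0, hT.2⟩]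
  ring

end Existence

lemma eq_zero_of_integrableOn_Ioc_mul_rpow {C s b : ℝ} (hb : 0 < b) (hs : s ≤ -1)
    (h : IntegrableOn (fun t => C * t ^ s) (Ioc 0 b)) : C = 0 := by
  by_contra hC
  have hpow : IntegrableOn (fun t => t ^ s) (Ioo 0 b) :=
    IntegrableOn.congr_fun ((h.mono_set Ioo_subset_Ioc_self).const_mul C⁻¹)
      (fun t _ => by simp only [← mul_assoc, inv_mul_cancel₀ hC, one_mul]) measurableSet_Ioo
  linarith [(intervalIntegral.integrableOn_Ioo_rpow_iff hb).mp hpow]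

namespace IsCauchySolution

variable {k b : ℝ} {f x : ℝ → ℝ}

theorem apply_zero (h : IsCauchySolution k b f x) (hb : 0 ≤ b) : x 0 = 0 := by
  obtain ⟨g, -, -, hx⟩ := h
  simp [hx 0 ⟨le_rfl, hb⟩]

theorem continuousOn (h : IsCauchySolution k b f x) : ContinuousOn x (Icc 0 b) := by
  obtain ⟨g, hg, -, hx⟩ := h
  exact (intervalIntegral.continuousOn_primitive
    ((integrableOn_Icc_iff_integrableOn_Ioc).mpr hg)).congr hx

theorem sub {f₁ f₂ x₁ x₂ : ℝ → ℝ} (h₁ : IsCauchySolution k b f₁ x₁)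
    (h₂ : IsCauchySolution k b f₂ x₂) : IsCauchySolution k b (f₁ - f₂) (x₁ - x₂) := by
  obtain ⟨g₁, hg₁, hode₁, hx₁⟩ := h₁
  obtain ⟨g₂, hg₂, hode₂, hx₂⟩ := h₂
  refine ⟨g₁ - g₂, hg₁.sub hg₂, ?_, fun t ht => ?_⟩
  · filter_upwards [hode₁, hode₂] with t h₁ h₂
    simp only [Pi.sub_apply, h₁, h₂]
    ring
  · have hsub : Ioc 0 t ⊆ Ioc 0 b := Ioc_subset_Ioc_right ht.2
    rw [Pi.sub_apply, hx₁ t ht, hx₂ t ht, ← integral_sub (hg₁.mono_set hsub) (hg₂.mono_set hsub)]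
    rfl

/-- On `[t, b]`, `s ^ k * x s` is absolutely continuous with derivative
`k s ^ (k - 1) x s + s ^ k x' s = 0` almost everywhere. -/
theorem rpow_mul_eq (h : IsCauchySolution k b 0 x) {t : ℝ} (ht : t ∈ Ioc 0 b) :
    t ^ k * x t = b ^ k * x b := by
  obtain ⟨g, hg, hode, hx⟩ := h
  have hb : 0 ≤ b := ht.1.le.trans ht.2
  have hgi : IntervalIntegrable g volume 0 b :=
    (intervalIntegrable_iff_integrableOn_Ioc_of_le hb).mpr hg
  have hxZ : ∀ s ∈ Icc 0 b, x s = ∫ u in 0..s, g u := fun s hs =>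
    (hx s hs).trans (intervalIntegral.integral_of_le hs.1).symm
  have hsub : uIcc t b ⊆ uIcc 0 b := by
    rw [uIcc_of_le ht.2, uIcc_of_le hb]
    exact Icc_subset_Icc_left ht.1.le
  have hpow : AbsolutelyContinuousOnInterval (fun s : ℝ => s ^ k) t b := by
    refine ContDiffOn.absolutelyContinuousOnInterval (contDiffOn_id.rpow_const_of_ne fun s hs => ?_)
    rw [uIcc_of_le ht.2] at hs
    exact (ht.1.trans_le hs.1).ne'
  have hAC : AbsolutelyContinuousOnInterval (fun s => s ^ k * ∫ u in 0..s, g u) t b :=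
    hpow.fun_mul ((hgi.absolutelyContinuousOnInterval_intervalIntegral left_mem_uIcc).mono hsub)
  have hderiv : ∀ᵐ s, s ∈ uIcc t b → HasDerivAt (fun s => s ^ k * ∫ u in 0..s, g u) 0 s := by
    filter_upwards [hgi.ae_hasDerivAt_integral, (ae_restrict_iff' measurableSet_Ioc).mp hode]
      with s hZ hgs hst
    have hs : s ∈ Icc t b := uIcc_of_le ht.2 ▸ hst
    have hs0 : 0 < s := ht.1.trans_le hs.1
    have hsb : s ∈ Icc 0 b := ⟨hs0.le, hs.2⟩
    refine ((Real.hasDerivAt_rpow_const (Or.inl hs0.ne')).mul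
      (hZ (hsub hst) 0 left_mem_uIcc)).congr_deriv ?_
    rw [hgs ⟨hs0, hs.2⟩, Pi.zero_apply, add_zero, ← hxZ s hsb, Real.rpow_sub_one hs0.ne']
    field_simp
    ring
  obtain ⟨C, hC⟩ := hAC.const_of_ae_hasDerivAt_zero hderiv
  rw [hxZ t ⟨ht.1.le, ht.2⟩, hxZ b ⟨hb, le_rfl⟩, hC t left_mem_uIcc, hC b right_mem_uIcc]

theorem eqOn_zero (hk : 0 ≤ k) (h : IsCauchySolution k b 0 x)
    (hx : IntegrableOn (fun t => |x t| / t) (Ioc 0 b)) : EqOn x 0 (Icc 0 b) := by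
  intro t ht
  rcases ht.1.eq_or_lt with rfl | ht0
  · exact h.apply_zero ht.2
  have hb : 0 < b := ht0.trans_le ht.2
  have hpow : ∀ s ∈ Ioc 0 b, x s = b ^ k * x b * s ^ (-k) := fun s hs => by
    rw [← h.rpow_mul_eq hs, mul_comm, ← mul_assoc, ← Real.rpow_add hs.1, neg_add_cancel,
      Real.rpow_zero, one_mul]
  have hC : |b ^ k * x b| = 0 := by
    refine eq_zero_of_integrableOn_Ioc_mul_rpow hb (by linarith : -k - 1 ≤ -1)
      (hx.congr_fun (fun s hs => ?_) measurableSet_Ioc)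
    dsimp only
    rw [hpow s hs, abs_mul, abs_of_pos (Real.rpow_pos_of_pos hs.1 _), Real.rpow_sub_one hs.1.ne',
      mul_div_assoc]
  rw [hpow t ⟨ht0, ht.2⟩, abs_eq_zero.mp hC, zero_mul, Pi.zero_apply]

theorem eqOn (hk : 0 ≤ k) (hx : IsCauchySolution k b f x) {y : ℝ → ℝ}
    (hy : IsCauchySolution k b f y) (hxi : IntegrableOn (fun t => |x t| / t) (Ioc 0 b))
    (hyi : IntegrableOn (fun t => |y t| / t) (Ioc 0 b)) : EqOn x y (Icc 0 b) := by
  have hdiff : IsCauchySolution k b 0 (x - y) := sub_self f ▸ hx.sub hy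
  have hdiffi : IntegrableOn (fun t => |(x - y) t| / t) (Ioc 0 b) := by
    refine (hxi.add hyi).mono' ?_ ((ae_restrict_mem measurableSet_Ioc).mono fun t ht => ?_)
    · exact ((hdiff.continuousOn.mono Ioc_subset_Icc_self).abs.div continuousOn_id
        fun t ht => ht.1.ne').aestronglyMeasurable measurableSet_Ioc
    · simp only [Pi.add_apply, Pi.sub_apply]
      rw [Real.norm_eq_abs, abs_div, abs_abs, abs_of_pos ht.1, ← add_div]
      exact div_le_div_of_nonneg_right (abs_sub _ _) ht.1.le
  exact fun t ht => sub_eq_zero.mp (hdiff.eqOn_zero hk hdiffi ht)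

end IsCauchySolution

/-- For `k > 0`, `x t = ∫_0^t (s/t)^k f s ds` (with `x 0 = 0`) solves the Cauchy
problem `x' = -(k/t) x + f`, `x(0) = 0`, and is its unique solution in the space
`D₊ = {x ∈ AC[0,1] : x 0 = 0, ∫_0^1 |x t|/t dt < ∞}`. -/
theorem stmt_7 (k : ℝ) (hk : 0 < k) (f x : ℝ → ℝ)
    (hf : IntegrableOn f (Ioc 0 1))
    (hx : ∀ t ∈ Ioc (0:ℝ) 1, x t = ∫ s in Ioc (0:ℝ) t, (s / t) ^ k * f s)
    (hx0 : x 0 = 0) :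
    (∃ g : ℝ → ℝ, IntegrableOn g (Ioc 0 1) ∧
      (∀ᵐ t ∂(volume.restrict (Ioc (0:ℝ) 1)), g t = -(k / t) * x t + f t) ∧
      (∀ t ∈ Icc (0:ℝ) 1, x t = ∫ s in Ioc (0:ℝ) t, g s)) ∧
    (∀ y : ℝ → ℝ, y 0 = 0 →
      IntegrableOn (fun t => |y t| / t) (Ioc 0 1) →
      (∃ g : ℝ → ℝ, IntegrableOn g (Ioc 0 1) ∧
        (∀ᵐ t ∂(volume.restrict (Ioc (0:ℝ) 1)), g t = -(k / t) * y t + f t) ∧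
        (∀ t ∈ Icc (0:ℝ) 1, y t = ∫ s in Ioc (0:ℝ) t, g s)) →
      ∀ t ∈ Icc (0:ℝ) 1, y t = x t) := by
  have hsol : IsCauchySolution k 1 f x := isCauchySolution_of_eq_setIntegral hk hf hx hx0
  exact ⟨hsol, fun y _ hyi hy =>
    IsCauchySolution.eqOn hk.le hy hsol hyi (integrableOn_abs_div_of_eq_setIntegral hk hf hx)⟩
end

section
/- Let k < 0, c ∈ ℝ, f ∈ L¹(0,1). The boundary value problem x'(t) = -(k/t)x(t) + f(t) a.e. on (0,1], x(1) = c, has a unique solution in the space D₋ = {x ∈ AC[0,1] : x(0)=0, ∫_0^1 |x(t)|/t dt < ∞}, given by x(t) = t^{|k|}·(c - ∫_t^1 s^{-|k|} f(s) ds). -/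
/-!
Write `a = |k|` and `F t = ∫_t^1 s^{-a} f s ds`. The candidate `x t = t^a (c - F t)` is the
primitive of `g s = a s^{a-1} (c - F s) + f s`: the only delicate term is `s ↦ a s^{a-1} F s`
near `0`, and Fubini on the triangle `0 < s < u ≤ t` with the kernel `a s^{a-1} u^{-a} f u`
shows it is integrable with `∫_0^t a s^{a-1} F s ds = ∫_0^t f + t^a F t`, because
`∫_0^u a s^{a-1} ds = u^a` cancels the weight `u^{-a}`. The same integrability gives
`∫_0^1 |x t| / t dt < ∞`.

The difference `P` of two solutions satisfies `P t = -∫_t^1 a P s / s ds`, so `P' = a P / t` on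
`(0, 1)`; hence `t^{-a} P t` is constant on `[t, 1]` and vanishes because `P 1 = 0`.
-/

open MeasureTheory Set Filter Topology

section Fubini

variable {a s T : ℝ} {f : ℝ → ℝ}

lemma integral_Ioc_mul_rpow_sub_one (ha : 0 < a) {u : ℝ} (hu : 0 ≤ u) :
    ∫ s in Ioc 0 u, a * s ^ (a - 1) = u ^ a := by
  rw [← intervalIntegral.integral_of_le hu,
    intervalIntegral.integral_const_mul, integral_rpow (Or.inl (by linarith)), sub_add_cancel,
    Real.zero_rpow ha.ne', sub_zero, mul_div_cancel₀ _ ha.ne']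

lemma integrableOn_mul_rpow_sub_one (ha : 0 < a) (T : ℝ) :
    IntegrableOn (fun s => a * s ^ (a - 1)) (Ioc 0 T) :=
  ((intervalIntegral.intervalIntegrable_rpow' (a := 0) (b := T) (by linarith)).1).const_mul a

noncomputable def powKernel (a : ℝ) (f : ℝ → ℝ) : ℝ × ℝ → ℝ :=
  {p : ℝ × ℝ | p.1 < p.2}.indicator fun p => a * p.1 ^ (a - 1) * (p.2 ^ (-a) * f p.2)

lemma powKernel_apply_left (s u : ℝ) :
    powKernel a f (s, u) = a * s ^ (a - 1) * (Ioi s).indicator (fun u => u ^ (-a) * f u) u := by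
  by_cases h : s < u <;> simp [powKernel, indicator, h]

lemma powKernel_apply_right (s u : ℝ) :
    powKernel a f (s, u) = (Iio u).indicator (fun s => a * s ^ (a - 1)) s * (u ^ (-a) * f u) := by
  by_cases h : s < u <;> simp [powKernel, indicator, h]

lemma integral_powKernel_left (hs : 0 ≤ s) :
    ∫ u in Ioc 0 T, powKernel a f (s, u) =
      a * s ^ (a - 1) * ∫ u in Ioc s T, u ^ (-a) * f u := by
  simp_rw [powKernel_apply_left, integral_const_mul, setIntegral_indicator measurableSet_Ioi,
    Ioc_inter_Ioi, max_eq_right hs]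

lemma integral_powKernel_right (ha : 0 < a) {u : ℝ} (hu : u ∈ Ioc 0 T) :
    ∫ s in Ioc 0 T, powKernel a f (s, u) = f u := by
  have hinter : Ioc 0 T ∩ Iio u = Ioo 0 u := by
    ext s
    simp only [mem_inter_iff, mem_Ioc, mem_Iio, mem_Ioo]
    exact ⟨fun h => ⟨h.1.1, h.2⟩, fun h => ⟨⟨h.1, h.2.le.trans hu.2⟩, h.2⟩⟩
  simp_rw [powKernel_apply_right, integral_mul_const, setIntegral_indicator measurableSet_Iio,
    hinter, ← integral_Ioc_eq_integral_Ioo, integral_Ioc_mul_rpow_sub_one ha hu.1.le,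
    ← mul_assoc, ← Real.rpow_add hu.1, add_neg_cancel, Real.rpow_zero, one_mul]

lemma norm_powKernel (ha : 0 < a) (hs : 0 < s) (u : ℝ) :
    ‖powKernel a f (s, u)‖ = powKernel a (fun u => ‖f u‖) (s, u) := by
  by_cases h : s < u
  · simp only [powKernel, indicator, mem_ofPred_eq, h, if_true, norm_mul, Real.norm_eq_abs,
      abs_of_pos ha, abs_of_pos (Real.rpow_pos_of_pos hs _),
      abs_of_pos (Real.rpow_pos_of_pos (hs.trans h) _)]
  · simp [powKernel, indicator, h]

lemma integrable_powKernel (ha : 0 < a) (hf : IntegrableOn f (Ioc 0 T)) :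
    Integrable (powKernel a f) ((volume.restrict (Ioc 0 T)).prod (volume.restrict (Ioc 0 T))) := by
  have hmeas : AEStronglyMeasurable (powKernel a f)
      ((volume.restrict (Ioc 0 T)).prod (volume.restrict (Ioc 0 T))) := by
    refine AEStronglyMeasurable.indicator ?_ (measurableSet_lt measurable_fst measurable_snd)
    refine .mul ?_ (AEStronglyMeasurable.comp_snd (f := fun u => u ^ (-a) * f u) ?_)
    · exact (measurable_fst.pow_const _).const_mul a |>.aestronglyMeasurable
    · exact ((measurable_id.pow_const _).aestronglyMeasurable).mul hf.1
  rw [integrable_prod_iff' hmeas]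
  refine ⟨Eventually.of_forall fun u => ?_, ?_⟩
  · simp_rw [powKernel_apply_right]
    exact (((integrableOn_mul_rpow_sub_one ha T).indicator measurableSet_Iio).mul_const _)
  · refine hf.norm.congr ?_
    filter_upwards [ae_restrict_mem measurableSet_Ioc] with u hu
    rw [← integral_powKernel_right (f := fun u => ‖f u‖) ha hu]
    exact setIntegral_congr_fun measurableSet_Ioc fun s hs => (norm_powKernel ha hs.1 u).symm

lemma integrableOn_mul_rpow_mul_setIntegral_Ioc (ha : 0 < a) (hf : IntegrableOn f (Ioc 0 T)) :
    IntegrableOn (fun s => a * s ^ (a - 1) * ∫ u in Ioc s T, u ^ (-a) * f u) (Ioc 0 T) := by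
  refine (integrable_powKernel ha hf).integral_prod_left.congr ?_
  filter_upwards [ae_restrict_mem measurableSet_Ioc] with s hs
  exact integral_powKernel_left hs.1.le

lemma integral_mul_rpow_mul_setIntegral_Ioc (ha : 0 < a) (hf : IntegrableOn f (Ioc 0 T)) :
    ∫ s in Ioc 0 T, a * s ^ (a - 1) * ∫ u in Ioc s T, u ^ (-a) * f u = ∫ u in Ioc 0 T, f u :=
  calc _ = ∫ s in Ioc 0 T, ∫ u in Ioc 0 T, powKernel a f (s, u) :=
        setIntegral_congr_fun measurableSet_Ioc fun _ hs => (integral_powKernel_left hs.1.le).symm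
    _ = ∫ u in Ioc 0 T, ∫ s in Ioc 0 T, powKernel a f (s, u) :=
        integral_integral_swap (integrable_powKernel ha hf)
    _ = _ := setIntegral_congr_fun measurableSet_Ioc fun _ hu => integral_powKernel_right ha hu

end Fubini

section Existence

variable {a c : ℝ} {f : ℝ → ℝ}

noncomputable def tailIntegral (a : ℝ) (f : ℝ → ℝ) (t : ℝ) : ℝ :=
  ∫ s in t..1, s ^ (-a) * f s

lemma intervalIntegrable_rpow_neg_mul (hf : IntegrableOn f (Ioc 0 1)) {s t : ℝ} (hs : 0 < s)
    (hst : s ≤ t) (ht : t ≤ 1) : IntervalIntegrable (fun u => u ^ (-a) * f u) volume s t := by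
  rw [intervalIntegrable_iff_integrableOn_Icc_of_le hst]
  refine IntegrableOn.continuousOn_mul ?_ (hf.mono_set ?_) isCompact_Icc
  · exact continuousOn_id.rpow_const fun u hu => Or.inl (hs.trans_le hu.1).ne'
  · exact Icc_subset_Ioc_iff hst |>.2 ⟨hs, ht⟩

lemma tailIntegral_eq_add (hf : IntegrableOn f (Ioc 0 1)) {s t : ℝ} (hs : 0 < s) (hst : s ≤ t)
    (ht : t ≤ 1) :
    tailIntegral a f s = (∫ u in Ioc s t, u ^ (-a) * f u) + tailIntegral a f t := by
  rw [tailIntegral, tailIntegral, ← intervalIntegral.integral_of_le hst,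
    intervalIntegral.integral_add_adjacent_intervals (intervalIntegrable_rpow_neg_mul hf hs hst ht)
      (intervalIntegrable_rpow_neg_mul hf (hs.trans_le hst) ht le_rfl)]

lemma integrableOn_mul_rpow_mul_tailIntegral (ha : 0 < a) (hf : IntegrableOn f (Ioc 0 1)) :
    IntegrableOn (fun s => a * s ^ (a - 1) * tailIntegral a f s) (Ioc 0 1) := by
  refine (integrableOn_mul_rpow_mul_setIntegral_Ioc ha hf).congr ?_
  filter_upwards [ae_restrict_mem measurableSet_Ioc] with s hs
  rw [tailIntegral, intervalIntegral.integral_of_le hs.2]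

lemma integrableOn_mul_rpow_mul_sub_tailIntegral (ha : 0 < a) (hf : IntegrableOn f (Ioc 0 1)) :
    IntegrableOn (fun s => a * s ^ (a - 1) * (c - tailIntegral a f s)) (Ioc 0 1) := by
  simp_rw [mul_sub]
  exact ((integrableOn_mul_rpow_sub_one ha 1).mul_const c).sub
    (integrableOn_mul_rpow_mul_tailIntegral ha hf)

lemma setIntegral_Ioc_eq_rpow_mul (ha : 0 < a) (hf : IntegrableOn f (Ioc 0 1)) {t : ℝ}
    (ht : t ∈ Icc (0:ℝ) 1) :
    ∫ s in Ioc 0 t, (a * s ^ (a - 1) * (c - tailIntegral a f s) + f s)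
      = t ^ a * (c - tailIntegral a f t) := by
  rcases ht.1.eq_or_lt with rfl | ht0
  · simp [Real.zero_rpow ha.ne']
  have hft : IntegrableOn f (Ioc 0 t) := hf.mono_set (Ioc_subset_Ioc_right ht.2)
  have htail : ∫ s in Ioc 0 t, a * s ^ (a - 1) * tailIntegral a f s
      = (∫ s in Ioc 0 t, f s) + t ^ a * tailIntegral a f t := by
    rw [setIntegral_congr_fun measurableSet_Ioc fun s hs => by
        rw [tailIntegral_eq_add hf hs.1 hs.2 ht.2, mul_add],
      integral_add (integrableOn_mul_rpow_mul_setIntegral_Ioc ha hft)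
        ((integrableOn_mul_rpow_sub_one ha t).mul_const _),
      integral_mul_rpow_mul_setIntegral_Ioc ha hft, integral_mul_const,
      integral_Ioc_mul_rpow_sub_one ha ht0.le]
  have hc : IntegrableOn (fun s => a * s ^ (a - 1) * c) (Ioc 0 t) :=
    (integrableOn_mul_rpow_sub_one ha t).mul_const c
  have hF : IntegrableOn (fun s => a * s ^ (a - 1) * tailIntegral a f s) (Ioc 0 t) :=
    (integrableOn_mul_rpow_mul_tailIntegral ha hf).mono_set (Ioc_subset_Ioc_right ht.2)
  simp_rw [mul_sub]
  rw [integral_add (f := fun s => a * s ^ (a - 1) * c - a * s ^ (a - 1) * tailIntegral a f s)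
      (hc.sub hF) hft, integral_sub hc hF, htail, integral_mul_const,
    integral_Ioc_mul_rpow_sub_one ha ht0.le]
  ring

lemma integrableOn_abs_rpow_mul_sub_tailIntegral_div (ha : 0 < a)
    (hf : IntegrableOn f (Ioc 0 1)) :
    IntegrableOn (fun t => |t ^ a * (c - tailIntegral a f t)| / t) (Ioc 0 1) := by
  refine ((integrableOn_mul_rpow_mul_sub_tailIntegral (c := c) ha hf).const_mul a⁻¹).abs.congr ?_
  filter_upwards [ae_restrict_mem measurableSet_Ioc] with t ht
  rw [← mul_assoc, ← mul_assoc, inv_mul_cancel₀ ha.ne', one_mul, Real.rpow_sub_one ht.1.ne',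
    div_mul_eq_mul_div, abs_div, abs_of_pos ht.1]

end Existence

section Uniqueness

variable {a : ℝ} {P h : ℝ → ℝ}

lemma continuousOn_Icc_of_eq_setIntegral_Ioc (hh : IntegrableOn h (Ioc 0 1))
    (hP : ∀ t ∈ Icc (0:ℝ) 1, P t = ∫ s in Ioc 0 t, h s) : ContinuousOn P (Icc 0 1) := by
  have hprim : ContinuousOn (fun t => ∫ s in (0:ℝ)..t, h s) (uIcc 0 1) :=
    intervalIntegral.continuousOn_primitive_interval
      (by rwa [uIcc_of_le zero_le_one, integrableOn_Icc_iff_integrableOn_Ioc])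
  rw [uIcc_of_le zero_le_one] at hprim
  exact hprim.congr fun t ht => (hP t ht).trans (intervalIntegral.integral_of_le ht.1).symm

lemma eq_sub_integral_of_ae_eq (hh : IntegrableOn h (Ioc 0 1))
    (hP : ∀ t ∈ Icc (0:ℝ) 1, P t = ∫ s in Ioc 0 t, h s)
    (hPh : ∀ᵐ t ∂volume.restrict (Ioc 0 1), h t = a / t * P t) {t : ℝ}
    (ht : t ∈ Icc (0:ℝ) 1) : P t = P 1 - ∫ s in t..1, a / s * P s := by
  have hh' : IntervalIntegrable h volume 0 1 :=
    (intervalIntegrable_iff_integrableOn_Ioc_of_le zero_le_one).2 hh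
  have hsplit : (∫ s in (0:ℝ)..1, h s) - ∫ s in (0:ℝ)..t, h s = ∫ s in t..1, h s :=
    intervalIntegral.integral_interval_sub_left hh' (hh'.mono_set (by
      rw [uIcc_of_le zero_le_one, uIcc_of_le ht.1]; exact Icc_subset_Icc_right ht.2))
  have hcongr : ∫ s in t..1, h s = ∫ s in t..1, a / s * P s := by
    refine intervalIntegral.integral_congr_ae ?_
    filter_upwards [(ae_restrict_iff' measurableSet_Ioc).1 hPh] with s hs hst
    rw [uIoc_of_le ht.2] at hst
    exact hs ⟨ht.1.trans_lt hst.1, hst.2⟩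
  rw [hP t ht, hP 1 (right_mem_Icc.2 zero_le_one), ← intervalIntegral.integral_of_le ht.1,
    ← intervalIntegral.integral_of_le zero_le_one, ← hcongr, ← hsplit, sub_sub_cancel]

lemma hasDerivAt_of_eq_sub_integral (hPc : ContinuousOn P (Icc 0 1))
    (hPint : ∀ t ∈ Icc (0:ℝ) 1, P t = P 1 - ∫ s in t..1, a / s * P s) {t : ℝ}
    (ht : t ∈ Ioo (0:ℝ) 1) : HasDerivAt P (a / t * P t) t := by
  have hφ : ContinuousOn (fun s => a / s * P s) (Ioc 0 1) :=
    (continuousOn_const.div continuousOn_id fun s hs => hs.1.ne').mul (hPc.mono Ioc_subset_Icc_self)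
  have hderiv := (intervalIntegral.integral_hasDerivAt_left
    ((hφ.mono (Icc_subset_Ioc_iff ht.2.le |>.2 ⟨ht.1, le_rfl⟩)).intervalIntegrable_of_Icc
      ht.2.le)
    ((hφ.mono Ioo_subset_Ioc_self).stronglyMeasurableAtFilter isOpen_Ioo t ht)
    (hφ.continuousAt (Ioc_mem_nhds ht.1 ht.2))).const_sub (P 1)
  rw [neg_neg] at hderiv
  exact hderiv.congr_of_eventuallyEq (eventually_of_mem (Icc_mem_nhds ht.1 ht.2) hPint)

lemma eq_zero_of_hasDerivAt (hPc : ContinuousOn P (Icc 0 1))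
    (hP' : ∀ t ∈ Ioo (0:ℝ) 1, HasDerivAt P (a / t * P t) t) (hP1 : P 1 = 0) {t : ℝ}
    (ht : t ∈ Ioc (0:ℝ) 1) : P t = 0 := by
  have hQ : ∀ s ∈ Icc t 1, s ^ (-a) * P s = t ^ (-a) * P t := by
    refine constant_of_has_deriv_right_zero ?_ fun s hs => ?_
    · exact ((continuousOn_id.rpow_const fun s hs => Or.inl (ht.1.trans_le hs.1).ne').mul
        (hPc.mono (Icc_subset_Icc_left ht.1.le)))
    · have hs0 : 0 < s := ht.1.trans_le hs.1
      have := ((Real.hasDerivAt_rpow_const (p := -a) (Or.inl hs0.ne')).mul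
        (hP' s ⟨hs0, hs.2⟩)).hasDerivWithinAt (s := Ici s)
      refine this.congr_deriv ?_
      rw [Real.rpow_sub_one hs0.ne']
      field_simp
      ring
  have := hQ 1 (right_mem_Icc.2 ht.2)
  rw [hP1, mul_zero, eq_comm, mul_eq_zero] at this
  exact this.resolve_left (Real.rpow_pos_of_pos ht.1 _).ne'

lemma eqOn_zero_of_setIntegral_Ioc_of_ae_eq (hh : IntegrableOn h (Ioc 0 1))
    (hP : ∀ t ∈ Icc (0:ℝ) 1, P t = ∫ s in Ioc 0 t, h s)
    (hPh : ∀ᵐ t ∂volume.restrict (Ioc 0 1), h t = a / t * P t) (hP1 : P 1 = 0) :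
    EqOn P 0 (Icc 0 1) := by
  intro t ht
  rcases ht.1.eq_or_lt with rfl | ht0
  · simp [hP 0 ht]
  have hPc := continuousOn_Icc_of_eq_setIntegral_Ioc hh hP
  exact eq_zero_of_hasDerivAt hPc
    (fun _ hs => hasDerivAt_of_eq_sub_integral hPc
      (fun _ hu => eq_sub_integral_of_ae_eq hh hP hPh hu) hs)
    hP1 ⟨ht0, ht.2⟩

lemma eqOn_of_setIntegral_Ioc_of_ae_eq {x y gx gy f : ℝ → ℝ} (hgx : IntegrableOn gx (Ioc 0 1))
    (hgy : IntegrableOn gy (Ioc 0 1)) (hx : ∀ t ∈ Icc (0:ℝ) 1, x t = ∫ s in Ioc 0 t, gx s)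
    (hy : ∀ t ∈ Icc (0:ℝ) 1, y t = ∫ s in Ioc 0 t, gy s)
    (hgxe : ∀ᵐ t ∂volume.restrict (Ioc 0 1), gx t = a / t * x t + f t)
    (hgye : ∀ᵐ t ∂volume.restrict (Ioc 0 1), gy t = a / t * y t + f t) (h1 : x 1 = y 1) :
    EqOn x y (Icc 0 1) := by
  have hdiff : EqOn (fun t => x t - y t) 0 (Icc 0 1) := by
    refine eqOn_zero_of_setIntegral_Ioc_of_ae_eq (a := a) (hgx.sub hgy) (fun t ht => ?_) ?_
      (sub_eq_zero.2 h1)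
    · rw [hx t ht, hy t ht, ← integral_sub (hgx.mono_set (Ioc_subset_Ioc_right ht.2))
        (hgy.mono_set (Ioc_subset_Ioc_right ht.2))]
      rfl
    · filter_upwards [hgxe, hgye] with t hxt hyt
      rw [Pi.sub_apply, hxt, hyt]
      ring
  exact fun t ht => sub_eq_zero.1 (hdiff ht)

end Uniqueness

/-- For `k < 0`, the boundary value problem `x' = -(k/t) x + f`, `x 1 = c`, has a
unique solution in `D₋ = {x ∈ AC[0,1] : x 0 = 0, ∫_0^1 |x|/t dt < ∞}`, given by
`x t = t^{|k|} (c - ∫_t^1 s^{-|k|} f s ds)`. -/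
theorem stmt_11 (k : ℝ) (hk : k < 0) (c : ℝ) (f : ℝ → ℝ)
    (hf : IntegrableOn f (Ioc 0 1)) :
    ∃ x : ℝ → ℝ,
      (x 0 = 0 ∧ x 1 = c ∧ IntegrableOn (fun t => |x t| / t) (Ioc 0 1) ∧
        ∃ g : ℝ → ℝ, IntegrableOn g (Ioc 0 1) ∧
          (∀ t ∈ Icc (0:ℝ) 1, x t = ∫ s in Ioc (0:ℝ) t, g s) ∧
          (∀ᵐ t ∂(volume.restrict (Ioc (0:ℝ) 1)), g t = -(k / t) * x t + f t)) ∧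
      (∀ y : ℝ → ℝ,
        (y 0 = 0 ∧ y 1 = c ∧ IntegrableOn (fun t => |y t| / t) (Ioc 0 1) ∧
          ∃ g : ℝ → ℝ, IntegrableOn g (Ioc 0 1) ∧
            (∀ t ∈ Icc (0:ℝ) 1, y t = ∫ s in Ioc (0:ℝ) t, g s) ∧
            (∀ᵐ t ∂(volume.restrict (Ioc (0:ℝ) 1)), g t = -(k / t) * y t + f t)) →
        ∀ t ∈ Icc (0:ℝ) 1, y t = x t) ∧
      (∀ t ∈ Ioc (0:ℝ) 1, x t = t ^ |k| * (c - ∫ s in t..1, s ^ (-|k|) * f s)) := by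
  have ha : 0 < |k| := abs_pos.2 hk.ne
  have hcoef : ∀ t : ℝ, -(k / t) = |k| / t := fun t => by rw [abs_of_neg hk, neg_div]
  set x : ℝ → ℝ := fun t => t ^ |k| * (c - tailIntegral |k| f t) with hx
  set g : ℝ → ℝ := fun t => |k| * t ^ (|k| - 1) * (c - tailIntegral |k| f t) + f t with hg
  have hgint : IntegrableOn g (Ioc 0 1) := (integrableOn_mul_rpow_mul_sub_tailIntegral ha hf).add hf
  have hxg : ∀ t ∈ Icc (0:ℝ) 1, x t = ∫ s in Ioc 0 t, g s := fun t ht =>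
    (setIntegral_Ioc_eq_rpow_mul ha hf ht).symm
  have hx1 : x 1 = c := by simp [hx, tailIntegral]
  have hgae : ∀ᵐ t ∂volume.restrict (Ioc (0:ℝ) 1), g t = |k| / t * x t + f t := by
    filter_upwards [ae_restrict_mem measurableSet_Ioc] with t ht
    simp only [hg, hx, Real.rpow_sub_one ht.1.ne']
    ring
  refine ⟨x, ⟨by simp [hx, Real.zero_rpow ha.ne'], hx1,
      integrableOn_abs_rpow_mul_sub_tailIntegral_div ha hf, g, hgint, hxg,
      hgae.mono fun t ht => by rw [ht, hcoef]⟩, ?_, fun _ _ => rfl⟩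
  rintro y ⟨-, hy1, -, gy, hgyint, hyg, hgyae⟩
  exact eqOn_of_setIntegral_Ioc_of_ae_eq hgyint hgint hyg hxg
    (hgyae.mono fun t ht => by rw [ht, hcoef]) hgae (hy1.trans hx1.symm)
end

section
/- Let k > 0 and 0 ≤ t₁ < t₂ ≤ 1, and p₁, p₂ ∈ L¹(0,1). The problem x'(t) = -(k/t)x(t) + p₁(t)x(t₁) + p₂(t)x(t₂), x(0)=0, has only the trivial solution in D₊ if and only if the determinant Δ = (1 - ∫_0^{t₁}(s/t₁)^k p₁ ds)(1 - ∫_0^{t₂}(s/t₂)^k p₂ ds) - (∫_0^{t₁}(s/t₁)^k p₂ ds)(∫_0^{t₂}(s/t₂)^k p₁ ds) is nonzero. -/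
open MeasureTheory Set Filter Topology
open scoped ENNReal NNReal

lemma prim_cont {f : ℝ → ℝ} (hf : IntegrableOn f (Ioc 0 1)) :
    ContinuousOn (fun t => ∫ s in Ioc (0:ℝ) t, f s) (Icc 0 1) := by
  set f₀ := (Ioc (0:ℝ) 1).indicator f with hf₀def
  have hf₀ : Integrable f₀ := (integrable_indicator_iff measurableSet_Ioc).2 hf
  have hQ : Continuous fun t => ∫ u in (0:ℝ)..t, f₀ u :=
    intervalIntegral.continuous_primitive (fun a b => hf₀.intervalIntegrable) 0
  refine (hQ.continuousOn).congr ?_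
  intro t ht
  have h1 : ∫ u in (0:ℝ)..t, f₀ u = ∫ u in Ioc (0:ℝ) t, f₀ u :=
    intervalIntegral.integral_of_le ht.1
  have h2 : ∫ u in Ioc (0:ℝ) t, f₀ u = ∫ u in Ioc (0:ℝ) t, f u := by
    rw [integral_indicator measurableSet_Ioc, Measure.restrict_restrict measurableSet_Ioc,
      inter_eq_right.2 (Ioc_subset_Ioc le_rfl ht.2)]
  simp [h1, h2]

lemma weight_int {k : ℝ} (hk : 0 < k) {f : ℝ → ℝ} (hf : IntegrableOn f (Ioc 0 1)) :
    IntegrableOn (fun u => u ^ (-(k+1)) * ∫ s in Ioc (0:ℝ) u, s ^ k * |f s|) (Ioc 0 1) := by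
  set μ := volume.restrict (Ioc (0:ℝ) 1) with hμ
  set φ : ℝ → ℝ := fun s => s ^ k * |f s| with hφdef
  have hφmeas : AEStronglyMeasurable φ μ := by
    have h1 : Measurable fun s : ℝ => s ^ k := by measurability
    exact (h1.aestronglyMeasurable).mul (hf.1.norm.congr (by
      filter_upwards with s using (Real.norm_eq_abs (f s)).symm  ))
  have hφnn : ∀ s ∈ Ioc (0:ℝ) 1, 0 ≤ φ s := fun s hs =>
    mul_nonneg (Real.rpow_nonneg hs.1.le k) (abs_nonneg _)
  have hφ : IntegrableOn φ (Ioc 0 1) := by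
    refine Integrable.mono hf.abs hφmeas ?_
    filter_upwards [self_mem_ae_restrict measurableSet_Ioc] with s hs
    have h1 : s ^ k ≤ 1 := Real.rpow_le_one hs.1.le hs.2 hk.le
    have h0 : 0 ≤ s ^ k := Real.rpow_nonneg hs.1.le k
    simp only [hφdef, Real.norm_eq_abs, abs_mul, abs_abs, abs_of_nonneg h0]
    calc s ^ k * |f s| ≤ 1 * |f s| := by gcongr
      _ = |f s| := one_mul _
  set R : ℝ → ℝ := fun u => ∫ s in Ioc (0:ℝ) u, φ s with hRdef
  have hRnn : ∀ u, 0 ≤ R u := fun u => by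
    apply setIntegral_nonneg measurableSet_Ioc
    intro s hs
    exact mul_nonneg (Real.rpow_nonneg hs.1.le k) (abs_nonneg _)
  constructor
  · refine ContinuousOn.aestronglyMeasurable ?_ measurableSet_Ioc
    refine ContinuousOn.mul ?_ ((prim_cont hφ).mono Ioc_subset_Icc_self)
    exact ContinuousOn.rpow_const continuousOn_id fun u hu => Or.inl (ne_of_gt hu.1)
  · have hnn : 0 ≤ᵐ[μ] fun u => u ^ (-(k+1)) * R u := by
      filter_upwards [self_mem_ae_restrict measurableSet_Ioc] with u hu
      exact mul_nonneg (Real.rpow_nonneg hu.1.le _) (hRnn u)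
    rw [hasFiniteIntegral_iff_ofReal hnn]
    set W : ℝ → ℝ≥0∞ := fun u => ENNReal.ofReal (u ^ (-(k+1))) with hWdef
    set F : ℝ → ℝ≥0∞ := fun s => ENNReal.ofReal (φ s) with hFdef
    set T : Set (ℝ × ℝ) := {p | 0 < p.2 ∧ p.2 ≤ p.1} with hTdef
    have hT : MeasurableSet T :=
      (measurableSet_lt measurable_const measurable_snd).inter
        (measurableSet_le measurable_snd measurable_fst)
    set G : ℝ → ℝ → ℝ≥0∞ := fun u s => W u * T.indicator 1 (u, s) * F s with hGdef
    have hGmeas : AEMeasurable (Function.uncurry G) (μ.prod μ) := by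
      have h1 : Measurable fun p : ℝ × ℝ => W p.1 := by
        have : Measurable fun u : ℝ => u ^ (-(k+1)) := by measurability
        exact (this.ennreal_ofReal).comp measurable_fst
      have h2 : Measurable fun p : ℝ × ℝ => T.indicator (1 : ℝ × ℝ → ℝ≥0∞) p :=
        measurable_const.indicator hT
      have h3 : AEMeasurable (fun p : ℝ × ℝ => F p.2) (μ.prod μ) := by
        have hφm : AEMeasurable φ μ := hφmeas.aemeasurable
        exact (hφm.ennreal_ofReal).comp_quasiMeasurePreserving
          Measure.quasiMeasurePreserving_snd
      exact ((h1.mul h2).aemeasurable).mul h3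
    have key1 : ∀ u ∈ Ioc (0:ℝ) 1,
        ENNReal.ofReal (u ^ (-(k+1)) * R u) = ∫⁻ s, G u s ∂μ := by
      intro u hu
      have hres : μ.restrict (Ioc (0:ℝ) u) = volume.restrict (Ioc (0:ℝ) u) := by
        rw [hμ, Measure.restrict_restrict measurableSet_Ioc,
          inter_eq_left.2 (Ioc_subset_Ioc le_rfl hu.2)]
      have h2 : ENNReal.ofReal (R u) = ∫⁻ s in Ioc (0:ℝ) u, F s := by
        refine ofReal_integral_eq_lintegral_ofReal
          (hφ.mono_set (Ioc_subset_Ioc le_rfl hu.2)) ?_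
        filter_upwards [self_mem_ae_restrict measurableSet_Ioc] with s hs
        exact hφnn s ⟨hs.1, hs.2.trans hu.2⟩
      have h3 : ∀ s, G u s = W u * (Ioc (0:ℝ) u).indicator F s := by
        intro s
        by_cases hs : s ∈ Ioc (0:ℝ) u
        · have hsT : (u, s) ∈ T := ⟨hs.1, hs.2⟩
          simp [hGdef, indicator_of_mem hs, indicator_of_mem hsT]
        · have hsT : (u, s) ∉ T := fun h => hs ⟨h.1, h.2⟩
          simp [hGdef, indicator_of_notMem hs, indicator_of_notMem hsT]
      calc ENNReal.ofReal (u ^ (-(k+1)) * R u)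
          = W u * ENNReal.ofReal (R u) :=
            ENNReal.ofReal_mul (Real.rpow_nonneg hu.1.le _)
        _ = W u * ∫⁻ s in Ioc (0:ℝ) u, F s := by rw [h2]
        _ = W u * ∫⁻ s, (Ioc (0:ℝ) u).indicator F s ∂μ := by
            rw [lintegral_indicator measurableSet_Ioc, hres]
        _ = ∫⁻ s, W u * (Ioc (0:ℝ) u).indicator F s ∂μ := by
            rw [lintegral_const_mul' _ _ ENNReal.ofReal_ne_top]
        _ = ∫⁻ s, G u s ∂μ := lintegral_congr fun s => (h3 s).symm
    have key2 : ∀ s ∈ Ioc (0:ℝ) 1,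
        (∫⁻ u, G u s ∂μ) ≤ ENNReal.ofReal (|f s| / k) := by
      intro s hs
      have hWind : ∀ u, W u * T.indicator 1 (u, s) = (Ici s).indicator W u := by
        intro u
        by_cases h : s ≤ u
        · have : (u, s) ∈ T := ⟨hs.1, h⟩
          simp [indicator_of_mem this, indicator_of_mem (mem_Ici.2 h)]
        · have : (u, s) ∉ T := fun hh => h hh.2
          simp [indicator_of_notMem this,
            indicator_of_notMem (fun hh => h (mem_Ici.1 hh))]
      have hIcc : Ici s ∩ Ioc (0:ℝ) 1 = Icc s 1 := by
        ext u
        simp only [mem_inter_iff, mem_Ici, mem_Ioc, mem_Icc]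
        exact ⟨fun ⟨h1, _, h3⟩ => ⟨h1, h3⟩, fun ⟨h1, h2⟩ => ⟨h1, lt_of_lt_of_le hs.1 h1, h2⟩⟩
      have hWint : IntegrableOn (fun u => u ^ (-(k+1))) (Icc s 1) := by
        apply ContinuousOn.integrableOn_compact isCompact_Icc
        exact ContinuousOn.rpow_const continuousOn_id fun u hu =>
          Or.inl (ne_of_gt (lt_of_lt_of_le hs.1 hu.1))
      have hval : ∫ u in Icc s 1, u ^ (-(k+1)) = (s ^ (-k) - 1) / k := by
        rw [integral_Icc_eq_integral_Ioc, ← intervalIntegral.integral_of_le hs.2]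
        rw [integral_rpow (Or.inr ⟨by intro h; nlinarith, by
          intro h
          rcases h with h
          have := h.1
          simp only [inf_le_iff] at this
          rcases Set.mem_uIcc.1 h with ⟨h1, _⟩ | ⟨_, h2⟩
          · exact absurd h1 (not_le.2 hs.1)
          · linarith⟩)]
        have : -(k+1) + 1 = -k := by ring
        rw [this, Real.one_rpow]
        have hk0 : k ≠ 0 := hk.ne'
        rw [div_neg, ← neg_div]
        congr 1
        ring
      have hinner : (∫⁻ u, W u * T.indicator 1 (u, s) ∂μ) ≤ ENNReal.ofReal (s ^ (-k) / k) := by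
        have : (∫⁻ u, W u * T.indicator 1 (u, s) ∂μ) = ∫⁻ u in Icc s 1, W u := by
          rw [lintegral_congr fun u => hWind u, lintegral_indicator measurableSet_Ici, hμ,
            Measure.restrict_restrict measurableSet_Ici, hIcc]
        rw [this]
        have h4 : (∫⁻ u in Icc s 1, W u) = ENNReal.ofReal ((s ^ (-k) - 1) / k) := by
          rw [← hval]
          refine (ofReal_integral_eq_lintegral_ofReal hWint ?_).symm
          filter_upwards [self_mem_ae_restrict measurableSet_Icc] with u hu
          exact Real.rpow_nonneg (le_trans hs.1.le hu.1) _
        rw [h4]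
        apply ENNReal.ofReal_le_ofReal
        gcongr
        linarith
      calc (∫⁻ u, G u s ∂μ) = (∫⁻ u, W u * T.indicator 1 (u, s) ∂μ) * F s := by
            rw [← lintegral_mul_const' _ _ ENNReal.ofReal_ne_top]
        _ ≤ ENNReal.ofReal (s ^ (-k) / k) * F s := by gcongr
        _ = ENNReal.ofReal (s ^ (-k) / k * φ s) :=
            (ENNReal.ofReal_mul (div_nonneg (Real.rpow_nonneg hs.1.le _) hk.le)).symm
        _ = ENNReal.ofReal (|f s| / k) := by
            congr 1
            rw [hφdef]
            have : s ^ (-k) * s ^ k = 1 := by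
              rw [← Real.rpow_add hs.1]; simp
            field_simp
            nlinarith [abs_nonneg (f s)]
    have hfin : (∫⁻ s, ENNReal.ofReal (|f s| / k) ∂μ) < ⊤ := by
      have h5 : IntegrableOn (fun s => |f s| / k) (Ioc 0 1) := hf.abs.div_const k
      rw [← ofReal_integral_eq_lintegral_ofReal h5 (by
        filter_upwards with s using div_nonneg (abs_nonneg _) hk.le)]
      exact ENNReal.ofReal_lt_top
    calc ∫⁻ u, ENNReal.ofReal (u ^ (-(k+1)) * R u) ∂μ
        = ∫⁻ u, ∫⁻ s, G u s ∂μ ∂μ := by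
          refine lintegral_congr_ae ?_
          filter_upwards [self_mem_ae_restrict measurableSet_Ioc] with u hu
          exact key1 u hu
      _ = ∫⁻ s, ∫⁻ u, G u s ∂μ ∂μ := lintegral_lintegral_swap hGmeas
      _ ≤ ∫⁻ s, ENNReal.ofReal (|f s| / k) ∂μ := by
          refine lintegral_mono_ae ?_
          filter_upwards [self_mem_ae_restrict measurableSet_Ioc] with s hs
          exact key2 s hs
      _ < ⊤ := hfin
lemma fubini1 {k : ℝ} (hk : 0 < k) {g : ℝ → ℝ} (hg : IntegrableOn g (Ioc 0 1))
    {t : ℝ} (ht : 0 < t) (ht1 : t ≤ 1) :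
    ∫ s in Ioc (0:ℝ) t, (k * s ^ (k-1)) * ∫ u in Ioc (0:ℝ) s, g u
      = ∫ u in Ioc (0:ℝ) t, (t ^ k - u ^ k) * g u := by
  set μ := volume.restrict (Ioc (0:ℝ) t) with hμ
  set T : Set (ℝ × ℝ) := {p | 0 < p.2 ∧ p.2 ≤ p.1} with hTdef
  have hT : MeasurableSet T :=
    (measurableSet_lt measurable_const measurable_snd).inter
      (measurableSet_le measurable_snd measurable_fst)
  have hgt : IntegrableOn g (Ioc 0 t) := hg.mono_set (Ioc_subset_Ioc le_rfl ht1)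
  have hker : IntegrableOn (fun s : ℝ => k * s ^ (k-1)) (Ioc 0 t) := by
    have := (intervalIntegral.intervalIntegrable_rpow' (a := 0) (b := t) (r := k - 1) (by linarith)).const_mul k
    rw [intervalIntegrable_iff, uIoc_of_le ht.le] at this
    exact this
  set H : ℝ → ℝ → ℝ := fun s u => (k * s ^ (k-1)) * T.indicator 1 (s, u) * g u with hHdef
  have hHint : Integrable (Function.uncurry H) (μ.prod μ) := by
    have hFG : Integrable (fun p : ℝ × ℝ => (k * p.1 ^ (k-1)) * g p.2) (μ.prod μ) :=
      Integrable.mul_prod hker hgt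
    have huncurry : Function.uncurry H
        = fun p : ℝ × ℝ => (k * p.1 ^ (k-1)) * T.indicator 1 p * g p.2 := rfl
    have m1 : Measurable fun p : ℝ × ℝ => k * p.1 ^ (k-1) := by measurability
    have m3 : AEStronglyMeasurable (fun p : ℝ × ℝ => g p.2) (μ.prod μ) :=
      hgt.1.comp_quasiMeasurePreserving Measure.quasiMeasurePreserving_snd
    refine Integrable.mono' hFG.norm ?_ ?_
    · rw [huncurry]
      exact ((m1.aestronglyMeasurable.mul
        ((measurable_const.indicator hT).aestronglyMeasurable)).mul m3)
    · filter_upwards with p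
      rw [huncurry]
      by_cases hp : p ∈ T
      · simp only [indicator_of_mem hp, Pi.one_apply, mul_one]
        exact le_of_eq rfl
      · simp only [indicator_of_notMem hp, mul_zero, zero_mul, norm_zero]
        positivity
  have swap := integral_integral_swap (f := H) hHint
  have hLHS : ∫ s, ∫ u, H s u ∂μ ∂μ
      = ∫ s in Ioc (0:ℝ) t, (k * s ^ (k-1)) * ∫ u in Ioc (0:ℝ) s, g u := by
    refine setIntegral_congr_ae measurableSet_Ioc ?_
    filter_upwards with s hs
    have hres : μ.restrict (Ioc (0:ℝ) s) = volume.restrict (Ioc (0:ℝ) s) := by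
      rw [hμ, Measure.restrict_restrict measurableSet_Ioc,
        inter_eq_left.2 (Ioc_subset_Ioc le_rfl hs.2)]
    have h3 : ∀ u, H s u = (k * s ^ (k-1)) * (Ioc (0:ℝ) s).indicator g u := by
      intro u
      by_cases hu : u ∈ Ioc (0:ℝ) s
      · have : (s, u) ∈ T := ⟨hu.1, hu.2⟩
        simp [hHdef, indicator_of_mem this, indicator_of_mem hu]
      · have : (s, u) ∉ T := fun hh => hu ⟨hh.1, hh.2⟩
        simp [hHdef, indicator_of_notMem this, indicator_of_notMem hu]
    calc ∫ u, H s u ∂μ = ∫ u, (k * s ^ (k-1)) * (Ioc (0:ℝ) s).indicator g u ∂μ :=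
          integral_congr_ae (Eventually.of_forall h3)
      _ = (k * s ^ (k-1)) * ∫ u, (Ioc (0:ℝ) s).indicator g u ∂μ := integral_const_mul _ _
      _ = (k * s ^ (k-1)) * ∫ u in Ioc (0:ℝ) s, g u := by
          rw [integral_indicator measurableSet_Ioc, hres]
  have hRHS : ∫ u, ∫ s, H s u ∂μ ∂μ
      = ∫ u in Ioc (0:ℝ) t, (t ^ k - u ^ k) * g u := by
    refine setIntegral_congr_ae measurableSet_Ioc ?_
    filter_upwards with u hu
    have h3 : ∀ s, H s u = (Ici u).indicator (fun s => k * s ^ (k-1)) s * g u := by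
      intro s
      by_cases h : u ≤ s
      · have : (s, u) ∈ T := ⟨hu.1, h⟩
        simp [hHdef, indicator_of_mem this, indicator_of_mem (mem_Ici.2 h)]
      · have : (s, u) ∉ T := fun hh => h hh.2
        simp [hHdef, indicator_of_notMem this,
          indicator_of_notMem (fun hh => h (mem_Ici.1 hh))]
    have hIcc : Ici u ∩ Ioc (0:ℝ) t = Icc u t := by
      ext s
      simp only [mem_inter_iff, mem_Ici, mem_Ioc, mem_Icc]
      exact ⟨fun ⟨h1, _, h3⟩ => ⟨h1, h3⟩, fun ⟨h1, h2⟩ => ⟨h1, lt_of_lt_of_le hu.1 h1, h2⟩⟩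
    have hval : ∫ s in Icc u t, k * s ^ (k-1) = t ^ k - u ^ k := by
      rw [integral_Icc_eq_integral_Ioc, ← intervalIntegral.integral_of_le hu.2,
        intervalIntegral.integral_const_mul, integral_rpow (Or.inl (by linarith))]
      have : k - 1 + 1 = k := by ring
      rw [this]
      field_simp
    calc ∫ s, H s u ∂μ
        = ∫ s, (Ici u).indicator (fun s => k * s ^ (k-1)) s * g u ∂μ :=
          integral_congr_ae (Eventually.of_forall h3)
      _ = (∫ s, (Ici u).indicator (fun s => k * s ^ (k-1)) s ∂μ) * g u := integral_mul_const _ _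
      _ = (∫ s in Icc u t, k * s ^ (k-1)) * g u := by
          rw [integral_indicator measurableSet_Ici, hμ,
            Measure.restrict_restrict measurableSet_Ici, hIcc]
      _ = (t ^ k - u ^ k) * g u := by rw [hval]
  rw [← hLHS, ← hRHS, swap]

lemma phi_int {k : ℝ} (hk : 0 < k) {f : ℝ → ℝ} (hf : IntegrableOn f (Ioc 0 1)) :
    IntegrableOn (fun s => s ^ k * f s) (Ioc 0 1) := by
  have h1 : Measurable fun s : ℝ => s ^ k := by measurability
  refine Integrable.mono hf (h1.aestronglyMeasurable.mul hf.1) ?_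
  filter_upwards [self_mem_ae_restrict measurableSet_Ioc] with s hs
  have h1 : s ^ k ≤ 1 := Real.rpow_le_one hs.1.le hs.2 hk.le
  have h0 : 0 ≤ s ^ k := Real.rpow_nonneg hs.1.le k
  simp only [Real.norm_eq_abs, abs_mul, abs_of_nonneg h0]
  calc s ^ k * |f s| ≤ 1 * |f s| := by gcongr
    _ = |f s| := one_mul _

lemma fubini2 {k : ℝ} (hk : 0 < k) {f : ℝ → ℝ} (hf : IntegrableOn f (Ioc 0 1))
    {t : ℝ} (ht : 0 < t) (ht1 : t ≤ 1) :
    ∫ u in Ioc (0:ℝ) t, u ^ (-(k+1)) * ∫ s in Ioc (0:ℝ) u, s ^ k * f s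
      = ∫ s in Ioc (0:ℝ) t, ((s ^ (-k) - t ^ (-k))/k) * (s ^ k * f s) := by
  set μ := volume.restrict (Ioc (0:ℝ) t) with hμ
  set T : Set (ℝ × ℝ) := {p | 0 < p.2 ∧ p.2 ≤ p.1} with hTdef
  have hT : MeasurableSet T :=
    (measurableSet_lt measurable_const measurable_snd).inter
      (measurableSet_le measurable_snd measurable_fst)
  set φ : ℝ → ℝ := fun s => s ^ k * f s with hφdef
  have hφ1 : IntegrableOn φ (Ioc 0 1) := phi_int hk hf
  have hφt : IntegrableOn φ (Ioc 0 t) := hφ1.mono_set (Ioc_subset_Ioc le_rfl ht1)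
  set H : ℝ → ℝ → ℝ := fun u s => u ^ (-(k+1)) * T.indicator 1 (u, s) * φ s with hHdef
  have hres : ∀ u ∈ Ioc (0:ℝ) t, μ.restrict (Ioc (0:ℝ) u) = volume.restrict (Ioc (0:ℝ) u) := by
    intro u hu
    rw [hμ, Measure.restrict_restrict measurableSet_Ioc,
      inter_eq_left.2 (Ioc_subset_Ioc le_rfl hu.2)]
  have h3 : ∀ u s, H u s = u ^ (-(k+1)) * (Ioc (0:ℝ) u).indicator φ s := by
    intro u s
    by_cases hs : s ∈ Ioc (0:ℝ) u
    · have : (u, s) ∈ T := ⟨hs.1, hs.2⟩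
      simp [hHdef, indicator_of_mem this, indicator_of_mem hs]
    · have : (u, s) ∉ T := fun hh => hs ⟨hh.1, hh.2⟩
      simp [hHdef, indicator_of_notMem this, indicator_of_notMem hs]
  have m1 : Measurable fun p : ℝ × ℝ => p.1 ^ (-(k+1)) := by measurability
  have m3 : AEStronglyMeasurable (fun p : ℝ × ℝ => φ p.2) (μ.prod μ) :=
    hφt.1.comp_quasiMeasurePreserving Measure.quasiMeasurePreserving_snd
  have huncurry : Function.uncurry H
      = fun p : ℝ × ℝ => p.1 ^ (-(k+1)) * T.indicator 1 p * φ p.2 := rfl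
  have hAESM : AEStronglyMeasurable (Function.uncurry H) (μ.prod μ) := by
    rw [huncurry]
    exact (m1.aestronglyMeasurable.mul
      ((measurable_const.indicator hT).aestronglyMeasurable)).mul m3
  have hHint : Integrable (Function.uncurry H) (μ.prod μ) := by
    refine (integrable_prod_iff hAESM).2 ⟨?_, ?_⟩
    · filter_upwards [self_mem_ae_restrict measurableSet_Ioc] with u hu
      have heq : (fun s => Function.uncurry H (u, s))
          = fun s => u ^ (-(k+1)) * (Ioc (0:ℝ) u).indicator φ s := by
        funext s; exact h3 u s
      rw [heq]
      refine Integrable.const_mul ?_ _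
      refine (integrable_indicator_iff measurableSet_Ioc).2 ?_
      show Integrable φ (μ.restrict (Ioc (0:ℝ) u))
      rw [hres u hu]
      exact hφ1.mono_set (Ioc_subset_Ioc le_rfl (hu.2.trans ht1))
    · have hw := (weight_int hk hf).mono_set (Ioc_subset_Ioc le_rfl ht1)
      refine hw.congr ?_
      filter_upwards [self_mem_ae_restrict measurableSet_Ioc] with u hu
      have hptw : ∀ s, ‖Function.uncurry H (u, s)‖
          = u ^ (-(k+1)) * (Ioc (0:ℝ) u).indicator (fun s => s ^ k * |f s|) s := by
        intro s
        by_cases hs : s ∈ Ioc (0:ℝ) u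
        · have hT' : (u, s) ∈ T := ⟨hs.1, hs.2⟩
          show ‖H u s‖ = _
          simp only [hHdef, indicator_of_mem hs, indicator_of_mem hT', Pi.one_apply, mul_one]
          rw [Real.norm_eq_abs, abs_mul, abs_of_nonneg (Real.rpow_nonneg hu.1.le _), hφdef,
            abs_mul, abs_of_nonneg (Real.rpow_nonneg hs.1.le _)]
        · have hT' : (u, s) ∉ T := fun hh => hs ⟨hh.1, hh.2⟩
          show ‖H u s‖ = _
          simp [hHdef, indicator_of_notMem hs, indicator_of_notMem hT']
      calc u ^ (-(k+1)) * ∫ s in Ioc (0:ℝ) u, s ^ k * |f s|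
          = u ^ (-(k+1)) * ∫ s, (Ioc (0:ℝ) u).indicator (fun s => s ^ k * |f s|) s ∂μ := by
            rw [integral_indicator measurableSet_Ioc, hres u hu]
        _ = ∫ s, u ^ (-(k+1)) * (Ioc (0:ℝ) u).indicator (fun s => s ^ k * |f s|) s ∂μ :=
            (integral_const_mul _ _).symm
        _ = ∫ s, ‖Function.uncurry H (u, s)‖ ∂μ :=
            integral_congr_ae (Eventually.of_forall fun s => (hptw s).symm)
  have swap := integral_integral_swap (f := H) hHint
  have hLHS : ∫ u, ∫ s, H u s ∂μ ∂μ
      = ∫ u in Ioc (0:ℝ) t, u ^ (-(k+1)) * ∫ s in Ioc (0:ℝ) u, φ s := by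
    refine setIntegral_congr_ae measurableSet_Ioc ?_
    filter_upwards with u hu
    calc ∫ s, H u s ∂μ = ∫ s, u ^ (-(k+1)) * (Ioc (0:ℝ) u).indicator φ s ∂μ :=
          integral_congr_ae (Eventually.of_forall (h3 u))
      _ = u ^ (-(k+1)) * ∫ s, (Ioc (0:ℝ) u).indicator φ s ∂μ := integral_const_mul _ _
      _ = u ^ (-(k+1)) * ∫ s in Ioc (0:ℝ) u, φ s := by
          rw [integral_indicator measurableSet_Ioc, hres u hu]
  have hRHS : ∫ s, ∫ u, H u s ∂μ ∂μ
      = ∫ s in Ioc (0:ℝ) t, ((s ^ (-k) - t ^ (-k))/k) * φ s := by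
    refine setIntegral_congr_ae measurableSet_Ioc ?_
    filter_upwards with s hs
    have h4 : ∀ u, H u s = (Ici s).indicator (fun u => u ^ (-(k+1))) u * φ s := by
      intro u
      by_cases h : s ≤ u
      · have : (u, s) ∈ T := ⟨hs.1, h⟩
        simp [hHdef, indicator_of_mem this, indicator_of_mem (mem_Ici.2 h)]
      · have : (u, s) ∉ T := fun hh => h hh.2
        simp [hHdef, indicator_of_notMem this,
          indicator_of_notMem (fun hh => h (mem_Ici.1 hh))]
    have hIcc : Ici s ∩ Ioc (0:ℝ) t = Icc s t := by
      ext u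
      simp only [mem_inter_iff, mem_Ici, mem_Ioc, mem_Icc]
      exact ⟨fun ⟨h1, _, h3⟩ => ⟨h1, h3⟩, fun ⟨h1, h2⟩ => ⟨h1, lt_of_lt_of_le hs.1 h1, h2⟩⟩
    have hval : ∫ u in Icc s t, u ^ (-(k+1)) = (s ^ (-k) - t ^ (-k))/k := by
      rw [integral_Icc_eq_integral_Ioc, ← intervalIntegral.integral_of_le hs.2,
        integral_rpow (Or.inr ⟨by intro h; exact hk.ne' (by linarith), by
          rw [Set.uIcc_of_le hs.2]
          exact fun h => absurd h.1 (not_le.2 hs.1)⟩)]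
      have hexp : -(k+1) + 1 = -k := by ring
      rw [hexp, div_neg, ← neg_div]
      congr 1
      ring
    calc ∫ u, H u s ∂μ
        = ∫ u, (Ici s).indicator (fun u => u ^ (-(k+1))) u * φ s ∂μ :=
          integral_congr_ae (Eventually.of_forall h4)
      _ = (∫ u, (Ici s).indicator (fun u => u ^ (-(k+1))) u ∂μ) * φ s := integral_mul_const _ _
      _ = (∫ u in Icc s t, u ^ (-(k+1))) * φ s := by
          rw [integral_indicator measurableSet_Ici, hμ,
            Measure.restrict_restrict measurableSet_Ici, hIcc]
      _ = ((s ^ (-k) - t ^ (-k))/k) * φ s := by rw [hval]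
  rw [← hLHS, ← hRHS, swap]

/-- Rewrite the kernel integral. -/
lemma xval {k : ℝ} (f : ℝ → ℝ) {t : ℝ} (ht : 0 < t) :
    ∫ s in Ioc (0:ℝ) t, (s/t) ^ k * f s = t ^ (-k) * ∫ s in Ioc (0:ℝ) t, s ^ k * f s := by
  rw [← integral_const_mul]
  refine setIntegral_congr_ae measurableSet_Ioc ?_
  filter_upwards with s hs
  rw [Real.div_rpow hs.1.le ht.le, Real.rpow_neg ht.le]
  ring

/-- Uniqueness core: any solution has the kernel representation. -/
lemma repB {k : ℝ} (hk : 0 < k) {g f x : ℝ → ℝ}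
    (hg : IntegrableOn g (Ioc 0 1)) (hf : IntegrableOn f (Ioc 0 1))
    (hx : ∀ t ∈ Icc (0:ℝ) 1, x t = ∫ s in Ioc (0:ℝ) t, g s)
    (hae : ∀ᵐ u ∂(volume.restrict (Ioc (0:ℝ) 1)), g u = -(k / u) * x u + f u) :
    ∀ t ∈ Icc (0:ℝ) 1, x t = ∫ s in Ioc (0:ℝ) t, (s/t) ^ k * f s := by
  intro t ht
  rcases eq_or_lt_of_le ht.1 with rfl | htpos
  · rw [hx 0 ht]
    simp
  -- positive case
  have ht1 : t ≤ 1 := ht.2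
  set C : ℝ := ∫ s in Ioc (0:ℝ) 1, |g s| with hC
  have habs : IntegrableOn (fun s => |g s|) (Ioc 0 1) := hg.abs
  have hxbound : ∀ s ∈ Icc (0:ℝ) 1, |x s| ≤ C := by
    intro s hs
    rw [hx s hs, ← Real.norm_eq_abs]
    calc ‖∫ u in Ioc (0:ℝ) s, g u‖ ≤ ∫ u in Ioc (0:ℝ) s, ‖g u‖ :=
        norm_integral_le_integral_norm _
      _ ≤ ∫ u in Ioc (0:ℝ) 1, ‖g u‖ := by
        refine setIntegral_mono_set ?_ ?_ ?_
        · simpa [Real.norm_eq_abs] using habs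
        · filter_upwards with u using norm_nonneg _
        · exact HasSubset.Subset.eventuallyLE (Ioc_subset_Ioc le_rfl hs.2)
      _ = C := by simp [hC, Real.norm_eq_abs]
  -- a.e. measurability of x on Ioc 0 1
  have hxmeas : AEStronglyMeasurable x (volume.restrict (Ioc (0:ℝ) 1)) := by
    refine AEStronglyMeasurable.congr
      (((prim_cont hg).mono Ioc_subset_Icc_self).aestronglyMeasurable measurableSet_Ioc) ?_
    filter_upwards [self_mem_ae_restrict measurableSet_Ioc] with s hs
    exact (hx s (Ioc_subset_Icc_self hs)).symm
  -- integrability of the two pieces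
  have hkg : IntegrableOn (fun s => s ^ k * g s) (Ioc 0 t) :=
    (phi_int hk hg).mono_set (Ioc_subset_Ioc le_rfl ht1)
  have hker : IntegrableOn (fun s : ℝ => k * s ^ (k-1)) (Ioc 0 1) := by
    have := (intervalIntegral.intervalIntegrable_rpow' (a := 0) (b := 1) (r := k - 1)
      (by linarith)).const_mul k
    rw [intervalIntegrable_iff, uIoc_of_le zero_le_one] at this
    exact this
  have hkx : IntegrableOn (fun s => (k * s ^ (k-1)) * x s) (Ioc 0 1) := by
    refine Integrable.mono (hker.mul_const C) ?_ ?_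
    · have m1 : Measurable fun s : ℝ => k * s ^ (k-1) := by measurability
      exact m1.aestronglyMeasurable.mul hxmeas
    · filter_upwards [self_mem_ae_restrict measurableSet_Ioc] with s hs
      have h0 : (0:ℝ) ≤ k * s ^ (k-1) :=
        mul_nonneg hk.le (Real.rpow_nonneg hs.1.le _)
      have hxb := hxbound s (Ioc_subset_Icc_self hs)
      rw [Real.norm_eq_abs, Real.norm_eq_abs, abs_mul (k * s ^ (k-1)) (x s),
        abs_mul (k * s ^ (k-1)) C, abs_of_nonneg h0]
      exact mul_le_mul_of_nonneg_left (hxb.trans (le_abs_self C)) h0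
  -- main identity
  have key : ∫ s in Ioc (0:ℝ) t, s ^ k * f s = t ^ k * x t := by
    have hsplit : ∀ᵐ s ∂(volume.restrict (Ioc (0:ℝ) t)),
        s ^ k * f s = s ^ k * g s + (k * s ^ (k-1)) * x s := by
      have hsub : ∀ᵐ u ∂(volume.restrict (Ioc (0:ℝ) t)),
          g u = -(k / u) * x u + f u :=
        ae_restrict_of_ae_restrict_of_subset (Ioc_subset_Ioc le_rfl ht1) hae
      filter_upwards [hsub, self_mem_ae_restrict measurableSet_Ioc] with s hgs hs
      have hs0 : s ≠ 0 := ne_of_gt hs.1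
      have : f s = g s + (k / s) * x s := by rw [hgs]; ring
      rw [this]
      have hpow : s ^ k * (k / s) = k * s ^ (k-1) := by
        rw [Real.rpow_sub_one hs0]
        field_simp
      calc s ^ k * (g s + k / s * x s) = s ^ k * g s + (s ^ k * (k / s)) * x s := by ring
        _ = s ^ k * g s + (k * s ^ (k-1)) * x s := by rw [hpow]
    calc ∫ s in Ioc (0:ℝ) t, s ^ k * f s
        = ∫ s in Ioc (0:ℝ) t, (s ^ k * g s + (k * s ^ (k-1)) * x s) :=
          integral_congr_ae hsplit
      _ = (∫ s in Ioc (0:ℝ) t, s ^ k * g s)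
          + ∫ s in Ioc (0:ℝ) t, (k * s ^ (k-1)) * x s :=
          integral_add hkg (hkx.mono_set (Ioc_subset_Ioc le_rfl ht1))
      _ = (∫ s in Ioc (0:ℝ) t, s ^ k * g s)
          + ∫ s in Ioc (0:ℝ) t, (k * s ^ (k-1)) * ∫ u in Ioc (0:ℝ) s, g u := by
          congr 1
          refine setIntegral_congr_ae measurableSet_Ioc ?_
          filter_upwards with s hs
          rw [hx s ⟨hs.1.le, hs.2.trans ht1⟩]
      _ = (∫ s in Ioc (0:ℝ) t, s ^ k * g s)
          + ∫ u in Ioc (0:ℝ) t, (t ^ k - u ^ k) * g u := by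
          rw [fubini1 hk hg htpos ht1]
      _ = t ^ k * ∫ u in Ioc (0:ℝ) t, g u := by
          have h1 : IntegrableOn (fun u => t ^ k * g u) (Ioc 0 t) :=
            (hg.mono_set (Ioc_subset_Ioc le_rfl ht1)).const_mul _
          have hpull : ∫ u in Ioc (0:ℝ) t, (t ^ k - u ^ k) * g u
              = t ^ k * (∫ u in Ioc (0:ℝ) t, g u) - ∫ u in Ioc (0:ℝ) t, u ^ k * g u := by
            rw [← integral_const_mul, ← integral_sub h1 hkg]
            refine setIntegral_congr_ae measurableSet_Ioc ?_
            filter_upwards with u hu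
            ring
          rw [hpull]
          ring
      _ = t ^ k * x t := by rw [← hx t ht]
  rw [xval f htpos, key, ← mul_assoc, ← Real.rpow_add htpos, neg_add_cancel, Real.rpow_zero,
    one_mul]

lemma xval_lin {k : ℝ} (hk : 0 < k) {p₁ p₂ : ℝ → ℝ}
    (hp₁ : IntegrableOn p₁ (Ioc 0 1)) (hp₂ : IntegrableOn p₂ (Ioc 0 1))
    (a b : ℝ) {τ : ℝ} (hτ : 0 ≤ τ) (hτ1 : τ ≤ 1) :
    ∫ s in Ioc (0:ℝ) τ, (s/τ) ^ k * (p₁ s * a + p₂ s * b)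
      = a * (∫ s in Ioc (0:ℝ) τ, (s/τ) ^ k * p₁ s)
        + b * ∫ s in Ioc (0:ℝ) τ, (s/τ) ^ k * p₂ s := by
  rcases eq_or_lt_of_le hτ with rfl | hτpos
  · simp
  have h₁ : IntegrableOn (fun s => a * (s ^ k * p₁ s)) (Ioc 0 τ) :=
    (((phi_int hk hp₁).mono_set (Ioc_subset_Ioc le_rfl hτ1))).const_mul a
  have h₂ : IntegrableOn (fun s => b * (s ^ k * p₂ s)) (Ioc 0 τ) :=
    (((phi_int hk hp₂).mono_set (Ioc_subset_Ioc le_rfl hτ1))).const_mul b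
  rw [xval _ hτpos, xval _ hτpos, xval _ hτpos]
  have : ∫ s in Ioc (0:ℝ) τ, s ^ k * (p₁ s * a + p₂ s * b)
      = a * (∫ s in Ioc (0:ℝ) τ, s ^ k * p₁ s) + b * ∫ s in Ioc (0:ℝ) τ, s ^ k * p₂ s := by
    rw [← integral_const_mul, ← integral_const_mul, ← integral_add h₁ h₂]
    refine setIntegral_congr_ae measurableSet_Ioc ?_
    filter_upwards with s hs
    ring
  rw [this]
  ring

lemma repA {k : ℝ} (hk : 0 < k) {f : ℝ → ℝ} (hf : IntegrableOn f (Ioc 0 1)) :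
    IntegrableOn (fun t => |∫ s in Ioc (0:ℝ) t, (s/t) ^ k * f s| / t) (Ioc 0 1) ∧
    IntegrableOn (fun u => -(k/u) * (∫ s in Ioc (0:ℝ) u, (s/u) ^ k * f s) + f u) (Ioc 0 1) ∧
    ∀ t ∈ Icc (0:ℝ) 1, (∫ s in Ioc (0:ℝ) t, (s/t) ^ k * f s)
      = ∫ u in Ioc (0:ℝ) t, (-(k/u) * (∫ s in Ioc (0:ℝ) u, (s/u) ^ k * f s) + f u) := by
  set φ : ℝ → ℝ := fun s => s ^ k * f s with hφdef
  have hφ : IntegrableOn φ (Ioc 0 1) := phi_int hk hf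
  set P : ℝ → ℝ := fun u => ∫ s in Ioc (0:ℝ) u, φ s with hPdef
  set x : ℝ → ℝ := fun t => ∫ s in Ioc (0:ℝ) t, (s/t) ^ k * f s with hxdef
  have hxP : ∀ t : ℝ, 0 < t → x t = t ^ (-k) * P t := fun t ht => xval f ht
  have hPc : ContinuousOn P (Icc 0 1) := prim_cont hφ
  have hm : ContinuousOn (fun t => t ^ (-k) * P t) (Ioc 0 1) :=
    (ContinuousOn.rpow_const continuousOn_id fun t htm => Or.inl (ne_of_gt htm.1)).mul
      (hPc.mono Ioc_subset_Icc_self)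
  have hxmeas : AEStronglyMeasurable x (volume.restrict (Ioc (0:ℝ) 1)) := by
    refine (hm.aestronglyMeasurable measurableSet_Ioc).congr ?_
    filter_upwards [self_mem_ae_restrict measurableSet_Ioc] with t htm
    exact (hxP t htm.1).symm
  have hw := weight_int hk hf
  have habsP : ∀ t ∈ Ioc (0:ℝ) 1, |P t| ≤ ∫ s in Ioc (0:ℝ) t, s ^ k * |f s| := by
    intro t htm
    rw [← Real.norm_eq_abs]
    calc ‖P t‖ ≤ ∫ s in Ioc (0:ℝ) t, ‖φ s‖ := norm_integral_le_integral_norm _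
      _ = ∫ s in Ioc (0:ℝ) t, s ^ k * |f s| := by
        refine setIntegral_congr_ae measurableSet_Ioc ?_
        filter_upwards with s hs
        rw [Real.norm_eq_abs, hφdef, abs_mul, abs_of_nonneg (Real.rpow_nonneg hs.1.le k)]
  have hxb : ∀ t ∈ Ioc (0:ℝ) 1, |x t| ≤ t ^ (-k) * ∫ s in Ioc (0:ℝ) t, s ^ k * |f s| := by
    intro t htm
    rw [hxP t htm.1, abs_mul, abs_of_nonneg (Real.rpow_nonneg htm.1.le _)]
    exact mul_le_mul_of_nonneg_left (habsP t htm) (Real.rpow_nonneg htm.1.le _)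
  have hpow : ∀ t : ℝ, 0 < t → t ^ (-k) / t = t ^ (-(k+1)) := by
    intro t ht
    have : -(k+1) = -k + -1 := by ring
    rw [this, Real.rpow_add ht, Real.rpow_neg_one]
    field_simp
  have hD : IntegrableOn (fun t => |x t| / t) (Ioc 0 1) := by
    refine Integrable.mono hw ?_ ?_
    · have hax : AEStronglyMeasurable (fun t => |x t|) (volume.restrict (Ioc (0:ℝ) 1)) := by
        have := hxmeas.norm
        simpa [Real.norm_eq_abs] using this
      exact (hax.aemeasurable.div aemeasurable_id).aestronglyMeasurable
    · filter_upwards [self_mem_ae_restrict measurableSet_Ioc] with t htm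
      have hb := hxb t htm
      have hwnn : 0 ≤ t ^ (-(k+1)) * ∫ s in Ioc (0:ℝ) t, s ^ k * |f s| := by
        apply mul_nonneg (Real.rpow_nonneg htm.1.le _)
        apply setIntegral_nonneg measurableSet_Ioc
        exact fun s hs => mul_nonneg (Real.rpow_nonneg hs.1.le _) (abs_nonneg _)
      rw [Real.norm_eq_abs, Real.norm_eq_abs, abs_of_nonneg hwnn,
        abs_of_nonneg (div_nonneg (abs_nonneg _) htm.1.le)]
      calc |x t| / t ≤ (t ^ (-k) * ∫ s in Ioc (0:ℝ) t, s ^ k * |f s|) / t := by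
            gcongr
            exact htm.1.le
        _ = t ^ (-(k+1)) * ∫ s in Ioc (0:ℝ) t, s ^ k * |f s| := by
            rw [div_eq_mul_inv, mul_right_comm, ← div_eq_mul_inv, hpow t htm.1]
  have h2 : IntegrableOn (fun u => u ^ (-(k+1)) * P u) (Ioc 0 1) := by
    refine Integrable.mono hw ?_ ?_
    · refine ContinuousOn.aestronglyMeasurable ?_ measurableSet_Ioc
      exact (ContinuousOn.rpow_const continuousOn_id fun t htm => Or.inl (ne_of_gt htm.1)).mul
        (hPc.mono Ioc_subset_Icc_self)
    · filter_upwards [self_mem_ae_restrict measurableSet_Ioc] with u hu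
      have hwnn : 0 ≤ u ^ (-(k+1)) * ∫ s in Ioc (0:ℝ) u, s ^ k * |f s| := by
        apply mul_nonneg (Real.rpow_nonneg hu.1.le _)
        apply setIntegral_nonneg measurableSet_Ioc
        exact fun s hs => mul_nonneg (Real.rpow_nonneg hs.1.le _) (abs_nonneg _)
      rw [Real.norm_eq_abs, Real.norm_eq_abs, abs_of_nonneg hwnn, abs_mul,
        abs_of_nonneg (Real.rpow_nonneg hu.1.le _)]
      exact mul_le_mul_of_nonneg_left (habsP u hu) (Real.rpow_nonneg hu.1.le _)
  have hgae : ∀ u ∈ Ioc (0:ℝ) 1,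
      -(k/u) * x u + f u = -k * (u ^ (-(k+1)) * P u) + f u := by
    intro u hu
    congr 1
    rw [hxP u hu.1]
    have : -(k/u) * (u ^ (-k) * P u) = -k * ((u ^ (-k) / u) * P u) := by
      field_simp
    rw [this, hpow u hu.1]
  have hgint : IntegrableOn (fun u => -(k/u) * x u + f u) (Ioc 0 1) := by
    refine Integrable.congr ((h2.const_mul (-k)).add hf) ?_
    filter_upwards [self_mem_ae_restrict measurableSet_Ioc] with u hu
    exact (hgae u hu).symm
  refine ⟨hD, hgint, ?_⟩
  intro t ht
  rcases eq_or_lt_of_le ht.1 with rfl | htpos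
  · simp [hxdef]
  have ht1 : t ≤ 1 := ht.2
  have hfub := fubini2 hk hf htpos ht1
  have heval : ∫ s in Ioc (0:ℝ) t, ((s ^ (-k) - t ^ (-k))/k) * (s ^ k * f s)
      = (1/k) * ((∫ s in Ioc (0:ℝ) t, f s) - t ^ (-k) * P t) := by
    have hfm : IntegrableOn f (Ioc 0 t) := hf.mono_set (Ioc_subset_Ioc le_rfl ht1)
    have hφm : IntegrableOn (fun s => t ^ (-k) * φ s) (Ioc 0 t) :=
      (hφ.mono_set (Ioc_subset_Ioc le_rfl ht1)).const_mul _
    rw [hPdef, ← integral_const_mul, ← integral_sub hfm hφm, ← integral_const_mul]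
    refine setIntegral_congr_ae measurableSet_Ioc ?_
    filter_upwards with s hs
    have hsk : s ^ (-k) * s ^ k = 1 := by
      rw [← Real.rpow_add hs.1]; simp
    have expand : ((s ^ (-k) - t ^ (-k))/k) * (s ^ k * f s)
        = (1/k) * (s ^ (-k) * (s ^ k * f s) - t ^ (-k) * (s ^ k * f s)) := by
      ring
    rw [expand, ← mul_assoc, hsk, one_mul]
  have hstep : ∫ u in Ioc (0:ℝ) t, (-(k/u) * x u + f u)
      = -k * (∫ u in Ioc (0:ℝ) t, u ^ (-(k+1)) * P u) + ∫ u in Ioc (0:ℝ) t, f u := by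
    have ha : IntegrableOn (fun u => -k * (u ^ (-(k+1)) * P u)) (Ioc 0 t) :=
      (h2.mono_set (Ioc_subset_Ioc le_rfl ht1)).const_mul _
    have hb : IntegrableOn f (Ioc 0 t) := hf.mono_set (Ioc_subset_Ioc le_rfl ht1)
    calc ∫ u in Ioc (0:ℝ) t, (-(k/u) * x u + f u)
        = ∫ u in Ioc (0:ℝ) t, (-k * (u ^ (-(k+1)) * P u) + f u) := by
          refine setIntegral_congr_ae measurableSet_Ioc ?_
          filter_upwards with u hu
          exact hgae u ⟨hu.1, hu.2.trans ht1⟩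
      _ = (∫ u in Ioc (0:ℝ) t, -k * (u ^ (-(k+1)) * P u)) + ∫ u in Ioc (0:ℝ) t, f u :=
          integral_add ha hb
      _ = -k * (∫ u in Ioc (0:ℝ) t, u ^ (-(k+1)) * P u) + ∫ u in Ioc (0:ℝ) t, f u := by
          rw [integral_const_mul]
  show x t = ∫ u in Ioc (0:ℝ) t, (-(k/u) * x u + f u)
  rw [hstep, hfub, heval, hxP t htpos]
  have hk0 : k ≠ 0 := hk.ne'
  field_simp
  ring

/-- For `k > 0`, `0 ≤ t₁ < t₂ ≤ 1` and `p₁, p₂ ∈ L¹(0,1)`, the problem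
`x' = -(k/t)x + p₁ x(t₁) + p₂ x(t₂)`, `x 0 = 0`, has only the trivial solution in
`D₊` if and only if the `2×2` determinant `Δ` is nonzero. -/
theorem stmt_13 (k : ℝ) (hk : 0 < k) (t₁ t₂ : ℝ)
    (ht₁ : 0 ≤ t₁) (h₁₂ : t₁ < t₂) (ht₂ : t₂ ≤ 1)
    (p₁ p₂ : ℝ → ℝ)
    (hp₁ : IntegrableOn p₁ (Ioc 0 1)) (hp₂ : IntegrableOn p₂ (Ioc 0 1)) :
    (∀ x : ℝ → ℝ,
      (x 0 = 0 ∧ IntegrableOn (fun t => |x t| / t) (Ioc 0 1) ∧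
        ∃ g : ℝ → ℝ, IntegrableOn g (Ioc 0 1) ∧
          (∀ t ∈ Icc (0:ℝ) 1, x t = ∫ s in Ioc (0:ℝ) t, g s) ∧
          (∀ᵐ t ∂(volume.restrict (Ioc (0:ℝ) 1)),
            g t = -(k / t) * x t + p₁ t * x t₁ + p₂ t * x t₂)) →
      ∀ t ∈ Icc (0:ℝ) 1, x t = 0) ↔
    (1 - ∫ s in Ioc (0:ℝ) t₁, (s / t₁) ^ k * p₁ s) *
        (1 - ∫ s in Ioc (0:ℝ) t₂, (s / t₂) ^ k * p₂ s) -
      (∫ s in Ioc (0:ℝ) t₁, (s / t₁) ^ k * p₂ s) *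
        (∫ s in Ioc (0:ℝ) t₂, (s / t₂) ^ k * p₁ s) ≠ 0 := by
  set A₁ := ∫ s in Ioc (0:ℝ) t₁, (s / t₁) ^ k * p₁ s with hA₁
  set B₁ := ∫ s in Ioc (0:ℝ) t₁, (s / t₁) ^ k * p₂ s with hB₁
  set A₂ := ∫ s in Ioc (0:ℝ) t₂, (s / t₂) ^ k * p₁ s with hA₂
  set B₂ := ∫ s in Ioc (0:ℝ) t₂, (s / t₂) ^ k * p₂ s with hB₂
  have ht₂pos : 0 < t₂ := lt_of_le_of_lt ht₁ h₁₂
  have ht₁icc : t₁ ∈ Icc (0:ℝ) 1 := ⟨ht₁, le_trans h₁₂.le ht₂⟩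
  have ht₂icc : t₂ ∈ Icc (0:ℝ) 1 := ⟨ht₂pos.le, ht₂⟩
  constructor
  · intro h
    by_contra hΔ

    obtain ⟨a, b, e1, e2, hab⟩ : ∃ a b : ℝ,
        a = a * A₁ + b * B₁ ∧ b = a * A₂ + b * B₂ ∧ ¬(a = 0 ∧ b = 0) := by
      by_cases h1 : B₁ = 0 ∧ 1 - A₁ = 0
      · by_cases h2 : 1 - B₂ = 0 ∧ A₂ = 0
        · exact ⟨1, 0, by linear_combination h1.2, by linear_combination -h2.2, by simp⟩
        · exact ⟨1 - B₂, A₂, by linear_combination (1 - B₂) * h1.2 - A₂ * h1.1,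
            by ring, by
              intro hc
              exact h2 ⟨hc.1, hc.2⟩⟩
      · exact ⟨B₁, 1 - A₁, by ring, by linear_combination hΔ, by
          intro hc
          exact h1 ⟨hc.1, hc.2⟩⟩
    have hfint : IntegrableOn (fun s => p₁ s * a + p₂ s * b) (Ioc 0 1) :=
      (hp₁.mul_const a).add (hp₂.mul_const b)
    obtain ⟨hDint, hgint, hprim⟩ := repA hk hfint
    have hx0 : (∫ s in Ioc (0:ℝ) 0, (s/(0:ℝ)) ^ k * (p₁ s * a + p₂ s * b)) = 0 := by simp
    have hxt₁ : (∫ s in Ioc (0:ℝ) t₁, (s/t₁) ^ k * (p₁ s * a + p₂ s * b)) = a :=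
      (xval_lin hk hp₁ hp₂ a b ht₁ ht₁icc.2).trans e1.symm
    have hxt₂ : (∫ s in Ioc (0:ℝ) t₂, (s/t₂) ^ k * (p₁ s * a + p₂ s * b)) = b :=
      (xval_lin hk hp₁ hp₂ a b ht₂pos.le ht₂).trans e2.symm
    have main := h (fun t => ∫ s in Ioc (0:ℝ) t, (s/t) ^ k * (p₁ s * a + p₂ s * b))
      ⟨hx0, hDint,
        ⟨fun u => -(k/u) * (∫ s in Ioc (0:ℝ) u, (s/u) ^ k * (p₁ s * a + p₂ s * b))
            + (p₁ u * a + p₂ u * b), hgint, hprim, by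
          filter_upwards with u
          rw [hxt₁, hxt₂]
          ring⟩⟩
    exact hab ⟨hxt₁.symm.trans (main t₁ ht₁icc), hxt₂.symm.trans (main t₂ ht₂icc)⟩
  · intro hΔ x hx
    obtain ⟨hx0, hDx, g, hgint, hgprim, hgae⟩ := hx
    have hfint : IntegrableOn (fun u => p₁ u * x t₁ + p₂ u * x t₂) (Ioc 0 1) :=
      (hp₁.mul_const _).add (hp₂.mul_const _)
    have hae2 : ∀ᵐ u ∂(volume.restrict (Ioc (0:ℝ) 1)),
        g u = -(k / u) * x u + (p₁ u * x t₁ + p₂ u * x t₂) := by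
      filter_upwards [hgae] with u hu
      rw [hu]
      ring
    have hrep := repB hk hgint hfint hgprim hae2
    have h1 : x t₁ = x t₁ * A₁ + x t₂ * B₁ :=
      (hrep t₁ ht₁icc).trans (xval_lin hk hp₁ hp₂ _ _ ht₁ ht₁icc.2)
    have h2 : x t₂ = x t₁ * A₂ + x t₂ * B₂ :=
      (hrep t₂ ht₂icc).trans (xval_lin hk hp₁ hp₂ _ _ ht₂pos.le ht₂)
    have ha : x t₁ = 0 := by
      have hΔa : ((1 - A₁) * (1 - B₂) - B₁ * A₂) * x t₁ = 0 := by
        linear_combination (1 - B₂) * h1 + B₁ * h2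
      exact (mul_eq_zero.1 hΔa).resolve_left hΔ
    have hb : x t₂ = 0 := by
      have hΔb : ((1 - A₁) * (1 - B₂) - B₁ * A₂) * x t₂ = 0 := by
        linear_combination A₂ * h1 + (1 - A₁) * h2
      exact (mul_eq_zero.1 hΔb).resolve_left hΔ
    intro t ht
    rw [hrep t ht]
    have hzero : ∀ s : ℝ, (s/t) ^ k * (p₁ s * x t₁ + p₂ s * x t₂) = 0 := by
      intro s
      rw [ha, hb]
      ring
    calc ∫ s in Ioc (0:ℝ) t, (s/t) ^ k * (p₁ s * x t₁ + p₂ s * x t₂)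
        = ∫ s in Ioc (0:ℝ) t, (0:ℝ) := by
          refine integral_congr_ae (Eventually.of_forall fun s => hzero s)
      _ = 0 := integral_zero _ _
end

section
/- Let p : (0,1] → ℝ be positive with p ∈ L¹[ε,1] for all ε ∈ (0,1) and ∫_ε^1 p → ∞ as ε → 0+, let k < 0, and set x₁(t) = exp(k∫_t^1 p). For f ∈ L¹(0,1): ∫_0^1 |k| p(t) x₁(t) (∫_t^1 |f(s)|/x₁(s) ds) dt = ∫_0^1 (1 - x₁(0+)/x₁(s))|f(s)| ds = ∫_0^1 |f(s)| ds, where x₁(0+) = lim_{t→0+} x₁(t) = 0. -/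
/-!
On every `[a, 1] ⊆ (0, 1]`, `x₁` is absolutely continuous with `x₁' = |k| p x₁` a.e., so
`∫_a^s |k| p x₁ = x₁ s - x₁ a`. Letting `a → 0⁺` and using `x₁(0+) = 0` (forced by the
divergence of `∫_ε^1 p`) gives `∫_0^s |k| p x₁ = x₁ s`. Tonelli on the triangle
`0 < t < s ≤ 1` then turns the left-hand side into `∫_0^1 (|f s| / x₁ s) · x₁ s ds`.
-/

open MeasureTheory Set Filter Topology
open scoped ENNReal NNReal

theorem LipschitzOnWith.comp_absolutelyContinuousOnInterval {X Y : Type*}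
    [PseudoMetricSpace X] [PseudoMetricSpace Y] {f : ℝ → X} {g : X → Y} {K : ℝ≥0}
    {s : Set X} {a b : ℝ} (hg : LipschitzOnWith K g s) (hf : AbsolutelyContinuousOnInterval f a b)
    (hfs : MapsTo f (uIcc a b) s) : AbsolutelyContinuousOnInterval (g ∘ f) a b := by
  unfold AbsolutelyContinuousOnInterval at hf ⊢
  have : Tendsto (fun E : ℕ × (ℕ → ℝ × ℝ) ↦
      (K : ℝ) * ∑ i ∈ Finset.range E.1, dist (f (E.2 i).1) (f (E.2 i).2))
      (AbsolutelyContinuousOnInterval.totalLengthFilter ⊓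
        𝓟 (AbsolutelyContinuousOnInterval.disjWithin a b)) (𝓝 0) := by
    simpa using Filter.Tendsto.const_mul (K : ℝ) hf
  refine squeeze_zero' (Eventually.of_forall fun _ ↦ Finset.sum_nonneg fun _ _ ↦ dist_nonneg)
    ?_ this
  filter_upwards [eventually_inf_principal.mpr (Eventually.of_forall fun E hE ↦ hE)]
    with E hE
  rw [Finset.mul_sum]
  refine Finset.sum_le_sum fun i hi ↦ ?_
  exact hg.dist_le_mul _ (hfs (hE.1 i hi).1) _ (hfs (hE.1 i hi).2)

theorem Real.lipschitzOnWith_exp_Iic (C : ℝ) :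
    LipschitzOnWith (Real.exp C).toNNReal Real.exp (Iic C) :=
  (convex_Iic C).lipschitzOnWith_of_nnnorm_hasDerivWithin_le
    (fun x _ ↦ (Real.hasDerivAt_exp x).hasDerivWithinAt) fun x hx ↦ by
      rw [← NNReal.coe_le_coe, coe_nnnorm, Real.norm_of_nonneg (Real.exp_pos x).le,
        Real.coe_toNNReal _ (Real.exp_pos C).le]
      exact Real.exp_le_exp.mpr hx

theorem tendsto_measure_Ioc_nhdsGT (μ : Measure ℝ) (a b : ℝ) :
    Tendsto (fun x ↦ μ (Ioc x b)) (𝓝[>] a) (𝓝 (μ (Ioc a b))) := by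
  have hunion : Ioc a b = ⋃ x : Ioi a, Ioc (x : ℝ) b := by
    ext t
    simp only [mem_Ioc, mem_iUnion, Subtype.exists, mem_Ioi, exists_prop]
    constructor
    · rintro ⟨hat, htb⟩
      obtain ⟨x, hax, hxt⟩ := exists_between hat
      exact ⟨x, hax, hxt, htb⟩
    · rintro ⟨x, hax, hxt, htb⟩
      exact ⟨hax.trans hxt, htb⟩
  have : (atBot : Filter (Ioi a)).IsCountablyGenerated := by
    rw [← comap_coe_Ioi_nhdsGT a]
    infer_instance
  rw [← map_coe_Ioi_atBot a, tendsto_map'_iff, hunion]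
  exact tendsto_measure_iUnion_atBot fun x y hxy ↦ Ioc_subset_Ioc_left hxy

theorem integral_mul_exp_primitive {q : ℝ → ℝ} {a b c : ℝ}
    (hq : IntervalIntegrable q volume a b) (hc : c ∈ uIcc a b) :
    ∫ t in a..b, q t * Real.exp (∫ v in c..t, q v)
      = Real.exp (∫ v in c..b, q v) - Real.exp (∫ v in c..a, q v) := by
  have hQ := hq.absolutelyContinuousOnInterval_intervalIntegral hc
  obtain ⟨C, hC⟩ := hQ.exists_bound
  have hexpQ : AbsolutelyContinuousOnInterval (Real.exp ∘ fun t ↦ ∫ v in c..t, q v) a b :=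
    (Real.lipschitzOnWith_exp_Iic C).comp_absolutelyContinuousOnInterval hQ
      fun t ht ↦ (le_abs_self _).trans (hC t ht)
  have hftc := hexpQ.integral_deriv_eq_sub
  rw [Function.comp_apply, Function.comp_apply] at hftc
  rw [← hftc]
  refine intervalIntegral.integral_congr_ae ?_
  filter_upwards [hq.ae_hasDerivAt_integral] with t ht htab
  exact (((ht (uIoc_subset_uIcc htab) c hc).exp).deriv.trans (mul_comm _ _)).symm

theorem lintegral_mul_setLIntegral_Ioc_comm {μ : Measure ℝ} [SFinite μ] {g h : ℝ → ℝ≥0∞}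
    {a b : ℝ} (hg : AEMeasurable g (μ.restrict (Ioc a b)))
    (hh : AEMeasurable h (μ.restrict (Ioc a b))) :
    ∫⁻ t in Ioc a b, g t * ∫⁻ s in Ioc t b, h s ∂μ ∂μ
      = ∫⁻ s in Ioc a b, h s * ∫⁻ t in Ioo a s, g t ∂μ ∂μ := by
  set Φ : ℝ → ℝ → ℝ≥0∞ := fun t s ↦ {w : ℝ × ℝ | w.1 < w.2}.indicator
    (fun w ↦ g w.1 * h w.2) (t, s)
  have hΦ : AEMeasurable (Function.uncurry Φ)
      ((μ.restrict (Ioc a b)).prod (μ.restrict (Ioc a b))) :=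
    (hg.comp_fst.mul hh.comp_snd).indicator (measurableSet_lt measurable_fst measurable_snd)
  have hleft : ∀ t ∈ Ioc a b,
      g t * ∫⁻ s in Ioc t b, h s ∂μ = ∫⁻ s in Ioc a b, Φ t s ∂μ := by
    intro t ht
    have hΦt : Φ t = (Ioi t).indicator fun s ↦ g t * h s := by
      ext s; by_cases hts : t < s <;> simp [Φ, indicator, hts]
    rw [hΦt, lintegral_indicator measurableSet_Ioi, Measure.restrict_restrict measurableSet_Ioi,
      inter_comm, Ioc_inter_Ioi, max_eq_right ht.1.le, lintegral_const_mul'' _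
        (hh.mono_measure (Measure.restrict_mono (Ioc_subset_Ioc_left ht.1.le) le_rfl))]
  have hright : ∀ s ∈ Ioc a b,
      ∫⁻ t in Ioc a b, Φ t s ∂μ = h s * ∫⁻ t in Ioo a s, g t ∂μ := by
    intro s hs
    have hΦs : (fun t ↦ Φ t s) = (Iio s).indicator fun t ↦ g t * h s := by
      ext t; by_cases hts : t < s <;> simp [Φ, indicator, hts]
    have hIoo : Iio s ∩ Ioc a b = Ioo a s := by
      ext t
      simp only [mem_inter_iff, mem_Iio, mem_Ioc, mem_Ioo]
      exact ⟨fun h ↦ ⟨h.2.1, h.1⟩, fun h ↦ ⟨h.2, h.1, h.2.le.trans hs.2⟩⟩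
    rw [hΦs, lintegral_indicator measurableSet_Iio, Measure.restrict_restrict measurableSet_Iio,
      hIoo, lintegral_mul_const'' _ (hg.mono_measure
        (Measure.restrict_mono (Ioo_subset_Ioc_self.trans (Ioc_subset_Ioc_right hs.2)) le_rfl)),
      mul_comm]
  calc ∫⁻ t in Ioc a b, g t * ∫⁻ s in Ioc t b, h s ∂μ ∂μ
      = ∫⁻ t in Ioc a b, ∫⁻ s in Ioc a b, Φ t s ∂μ ∂μ :=
        setLIntegral_congr_fun measurableSet_Ioc hleft
    _ = ∫⁻ s in Ioc a b, ∫⁻ t in Ioc a b, Φ t s ∂μ ∂μ := lintegral_lintegral_swap hΦ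
    _ = ∫⁻ s in Ioc a b, h s * ∫⁻ t in Ioo a s, g t ∂μ ∂μ :=
        setLIntegral_congr_fun measurableSet_Ioc hright

/-- The paper's `x₁`: the solution of `x' = -k p x` with `x 1 = 1`. -/
noncomputable def homogeneousSolution (p : ℝ → ℝ) (k t : ℝ) : ℝ :=
  Real.exp (k * ∫ s in Ioc t 1, p s)

section
variable {p : ℝ → ℝ} {k a s t : ℝ}

theorem homogeneousSolution_eq_mul_exp (hp : IntervalIntegrable p volume a 1)
    (ht : t ∈ Icc a 1) (hs : s ∈ Icc a 1) :
    homogeneousSolution p k t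
      = homogeneousSolution p k s * Real.exp (∫ v in s..t, -k * p v) := by
  have hp' : ∀ x ∈ Icc a 1, ∀ y ∈ Icc a 1, IntervalIntegrable p volume x y :=
    fun x hx y hy ↦
      hp.mono_set (uIcc_subset_uIcc (mem_uIcc_of_le hx.1 hx.2) (mem_uIcc_of_le hy.1 hy.2))
  have h1 : (1 : ℝ) ∈ Icc a 1 := ⟨ht.1.trans ht.2, le_rfl⟩
  rw [homogeneousSolution, homogeneousSolution, ← Real.exp_add,
    intervalIntegral.integral_const_mul,
    ← intervalIntegral.integral_of_le ht.2, ← intervalIntegral.integral_of_le hs.2,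
    ← intervalIntegral.integral_add_adjacent_intervals (hp' t ht s hs) (hp' s hs 1 h1),
    intervalIntegral.integral_symm t s]
  ring_nf

theorem mul_homogeneousSolution_eqOn (hp : IntervalIntegrable p volume a 1) (has : a ≤ s)
    (hs : s ≤ 1) :
    EqOn (fun t ↦ -k * p t * homogeneousSolution p k t)
      (fun t ↦ homogeneousSolution p k s * (-k * p t * Real.exp (∫ v in s..t, -k * p v)))
      (uIcc a s) := by
  intro t ht
  rw [uIcc_of_le has] at ht
  simp only
  rw [homogeneousSolution_eq_mul_exp hp ⟨ht.1, ht.2.trans hs⟩ ⟨has, hs⟩]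
  ring

theorem intervalIntegrable_mul_homogeneousSolution (hp : IntervalIntegrable p volume a 1)
    (has : a ≤ s) (hs : s ≤ 1) :
    IntervalIntegrable (fun t ↦ -k * p t * homogeneousSolution p k t) volume a s := by
  have hq : IntervalIntegrable (fun t ↦ -k * p t) volume a s :=
    (hp.mono_set (uIcc_subset_uIcc_left (mem_uIcc_of_le has hs))).const_mul (-k)
  refine ((hq.mul_continuousOn (Real.continuous_exp.comp_continuousOn
    (intervalIntegral.continuousOn_primitive_interval' hq right_mem_uIcc))).const_mul
      (homogeneousSolution p k s)).congr ?_
  exact fun t ht ↦ (mul_homogeneousSolution_eqOn hp has hs (uIoc_subset_uIcc ht)).symm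

theorem integral_mul_homogeneousSolution (hp : IntervalIntegrable p volume a 1)
    (has : a ≤ s) (hs : s ≤ 1) :
    ∫ t in a..s, -k * p t * homogeneousSolution p k t
      = homogeneousSolution p k s - homogeneousSolution p k a := by
  have hq : IntervalIntegrable (fun t ↦ -k * p t) volume a s :=
    (hp.mono_set (uIcc_subset_uIcc_left (mem_uIcc_of_le has hs))).const_mul (-k)
  rw [intervalIntegral.integral_congr (mul_homogeneousSolution_eqOn hp has hs),
    intervalIntegral.integral_const_mul, integral_mul_exp_primitive hq right_mem_uIcc,
    homogeneousSolution_eq_mul_exp (k := k) hp ⟨le_rfl, has.trans hs⟩ ⟨has, hs⟩]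
  simp only [intervalIntegral.integral_same, Real.exp_zero]
  ring

theorem tendsto_homogeneousSolution_nhdsGT_zero (hk : k < 0)
    (hp_div : Tendsto (fun ε ↦ ∫ t in Ioc ε 1, p t) (𝓝[>] 0) atTop) :
    Tendsto (homogeneousSolution p k) (𝓝[>] 0) (𝓝 0) :=
  Real.tendsto_exp_atBot.comp (hp_div.const_mul_atTop_of_neg hk)

theorem aestronglyMeasurable_of_forall_integrableOn_Icc
    (hp : ∀ ε ∈ Ioo (0 : ℝ) 1, IntegrableOn p (Icc ε 1)) :
    AEStronglyMeasurable p (volume.restrict (Ioc 0 1)) := by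
  refine LocallyIntegrableOn.aestronglyMeasurable fun t ht ↦ ?_
  refine ⟨Icc (t / 2) 1, ?_, hp (t / 2) ⟨half_pos ht.1, by linarith [ht.2]⟩⟩
  exact mem_of_superset (inter_mem_nhdsWithin _ (Ioi_mem_nhds (half_lt_self ht.1)))
    fun x hx ↦ ⟨hx.2.le, hx.1.2⟩

theorem neg_mul_mul_homogeneousSolution_nonneg (hk : k ≤ 0) (hpt : 0 ≤ p t) :
    0 ≤ -k * p t * homogeneousSolution p k t :=
  mul_nonneg (mul_nonneg (neg_nonneg.mpr hk) hpt) (Real.exp_pos _).le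

theorem monotoneOn_homogeneousSolution (hk : k ≤ 0)
    (hp_nonneg : ∀ t ∈ Ioc (0 : ℝ) 1, 0 ≤ p t)
    (hp : ∀ ε ∈ Ioo (0 : ℝ) 1, IntegrableOn p (Icc ε 1)) :
    MonotoneOn (homogeneousSolution p k) (Ioc 0 1) := by
  intro a ha s hs has
  rcases has.eq_or_lt with rfl | has
  · rfl
  have ha1 : a < 1 := has.trans_le hs.2
  rw [← sub_nonneg, ← integral_mul_homogeneousSolution
    ((intervalIntegrable_iff_integrableOn_Icc_of_le ha1.le).mpr (hp a ⟨ha.1, ha1⟩)) has.le hs.2]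
  refine intervalIntegral.integral_nonneg has.le fun t ht ↦ ?_
  exact neg_mul_mul_homogeneousSolution_nonneg hk
    (hp_nonneg t ⟨ha.1.trans_le ht.1, ht.2.trans hs.2⟩)

theorem lintegral_Ioo_zero_mul_homogeneousSolution (hk : k ≤ 0)
    (hp_nonneg : ∀ t ∈ Ioc (0 : ℝ) 1, 0 ≤ p t)
    (hp : ∀ ε ∈ Ioo (0 : ℝ) 1, IntegrableOn p (Icc ε 1))
    (hX0 : Tendsto (homogeneousSolution p k) (𝓝[>] 0) (𝓝 0)) (hs : s ∈ Ioc (0 : ℝ) 1) :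
    ∫⁻ t in Ioo 0 s, ENNReal.ofReal (-k * p t * homogeneousSolution p k t)
      = ENNReal.ofReal (homogeneousSolution p k s) := by
  set g : ℝ → ℝ≥0∞ := fun t ↦ ENNReal.ofReal (-k * p t * homogeneousSolution p k t)
  have happrox : ∀ a ∈ Ioo 0 s, ∫⁻ t in Ioc a s, g t
      = ENNReal.ofReal (homogeneousSolution p k s - homogeneousSolution p k a) := by
    intro a ha
    have ha1 : a < 1 := ha.2.trans_le hs.2
    have hp_a : IntervalIntegrable p volume a 1 :=
      (intervalIntegrable_iff_integrableOn_Icc_of_le ha1.le).mpr (hp a ⟨ha.1, ha1⟩)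
    rw [← integral_mul_homogeneousSolution hp_a ha.2.le hs.2,
      intervalIntegral.integral_of_le ha.2.le, ofReal_integral_eq_lintegral_ofReal
        (intervalIntegrable_mul_homogeneousSolution hp_a ha.2.le hs.2).1]
    exact ae_restrict_of_forall_mem measurableSet_Ioc fun t ht ↦
      neg_mul_mul_homogeneousSolution_nonneg hk (hp_nonneg t ⟨ha.1.trans ht.1, ht.2.trans hs.2⟩)
  have hν := tendsto_measure_Ioc_nhdsGT (volume.withDensity g) 0 s
  simp only [withDensity_apply _ measurableSet_Ioc] at hν
  have hlim : Tendsto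
      (fun a ↦ ENNReal.ofReal (homogeneousSolution p k s - homogeneousSolution p k a)) (𝓝[>] 0)
       (𝓝 (ENNReal.ofReal (homogeneousSolution p k s))) := by
    have := (tendsto_const_nhds (x := homogeneousSolution p k s)).sub hX0
    rw [sub_zero] at this
    exact (ENNReal.continuous_ofReal.tendsto _).comp this
  rw [Measure.restrict_congr_set Ioo_ae_eq_Ioc]
  refine tendsto_nhds_unique (hν.congr' ?_) hlim
  filter_upwards [Ioo_mem_nhdsGT hs.1] with a ha using happrox a ha

theorem integral_mul_integral_div_homogeneousSolution (hk : k ≤ 0)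
    (hp_nonneg : ∀ t ∈ Ioc (0 : ℝ) 1, 0 ≤ p t)
    (hp : ∀ ε ∈ Ioo (0 : ℝ) 1, IntegrableOn p (Icc ε 1))
    (hX0 : Tendsto (homogeneousSolution p k) (𝓝[>] 0) (𝓝 0)) {f : ℝ → ℝ}
    (hf : IntegrableOn f (Ioc 0 1)) :
    ∫ t in Ioc 0 1, -k * p t * homogeneousSolution p k t *
        ∫ s in Ioc t 1, |f s| / homogeneousSolution p k s
      = ∫ s in Ioc 0 1, |f s| := by
  set X := homogeneousSolution p k
  set g : ℝ → ℝ≥0∞ := fun t ↦ ENNReal.ofReal (-k * p t * X t)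
  set L : ℝ → ℝ≥0∞ := fun t ↦ ∫⁻ s in Ioc t 1, ENNReal.ofReal (|f s| / X s)
  have hX_pos : ∀ s, 0 < X s := fun s ↦ Real.exp_pos _
  have hX : AEMeasurable X (volume.restrict (Ioc 0 1)) :=
    aemeasurable_restrict_of_monotoneOn measurableSet_Ioc
      (monotoneOn_homogeneousSolution hk hp_nonneg hp)
  have hfX : AEMeasurable (fun s ↦ |f s| / X s) (volume.restrict (Ioc 0 1)) :=
    hf.aestronglyMeasurable.aemeasurable.abs.div hX
  have hg : AEMeasurable g (volume.restrict (Ioc 0 1)) :=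
    ((aemeasurable_const.mul
      (aestronglyMeasurable_of_forall_integrableOn_Icc hp).aemeasurable).mul hX).ennreal_ofReal
  have hL : Measurable L :=
    Antitone.measurable fun t t' htt' ↦ lintegral_mono_set (Ioc_subset_Ioc_left htt')
  have hswap : ∫⁻ t in Ioc 0 1, g t * L t = ENNReal.ofReal (∫ s in Ioc 0 1, |f s|) := by
    rw [lintegral_mul_setLIntegral_Ioc_comm hg hfX.ennreal_ofReal,
      ofReal_integral_eq_lintegral_ofReal hf.abs (ae_of_all _ fun _ ↦ abs_nonneg _)]
    refine setLIntegral_congr_fun measurableSet_Ioc fun s hs ↦ ?_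
    rw [lintegral_Ioo_zero_mul_homogeneousSolution hk hp_nonneg hp hX0 hs,
      ← ENNReal.ofReal_mul (div_nonneg (abs_nonneg _) (hX_pos s).le),
      div_mul_cancel₀ _ (hX_pos s).ne']
  -- the inner integrals are finite a.e. because the swapped double integral is
  have hfin : ∀ᵐ t ∂volume.restrict (Ioc 0 1), g t * L t < ⊤ :=
    ae_lt_top' (hg.mul hL.aemeasurable) (hswap ▸ ENNReal.ofReal_ne_top)
  have hpointwise : ∀ t ∈ Ioc (0 : ℝ) 1,
      -k * p t * X t * ∫ s in Ioc t 1, |f s| / X s = (g t * L t).toReal := by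
    intro t ht
    have hgt : 0 ≤ -k * p t * X t := neg_mul_mul_homogeneousSolution_nonneg hk (hp_nonneg t ht)
    rw [ENNReal.toReal_mul, ENNReal.toReal_ofReal hgt,
      integral_eq_lintegral_of_nonneg_ae
        (ae_of_all _ fun s ↦ div_nonneg (abs_nonneg (f s)) (hX_pos s).le)
        (hfX.mono_measure
          (Measure.restrict_mono (Ioc_subset_Ioc_left ht.1.le) le_rfl)).aestronglyMeasurable]
  rw [setIntegral_congr_fun measurableSet_Ioc hpointwise,
    integral_toReal (f := fun t ↦ g t * L t) (hg.mul hL.aemeasurable) hfin, hswap,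
    ENNReal.toReal_ofReal (setIntegral_nonneg measurableSet_Ioc fun s _ ↦ abs_nonneg _)]

end

/-- Generalized model equation, `k < 0`: with `x₁ t = exp (k ∫_t^1 p)` one has
`x₁(0+) = 0` and the Tonelli identity
`∫_0^1 |k| p t x₁ t (∫_t^1 |f s| / x₁ s ds) dt = ∫_0^1 |f s| ds`. -/
theorem stmt_17 (p : ℝ → ℝ)
    (hp_pos : ∀ t ∈ Ioc (0:ℝ) 1, 0 < p t)
    (hp_int : ∀ ε ∈ Ioo (0:ℝ) 1, IntegrableOn p (Icc ε 1))
    (hp_div : Tendsto (fun ε => ∫ t in Ioc ε 1, p t) (𝓝[>] (0:ℝ)) atTop)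
    (k : ℝ) (hk : k < 0)
    (x₁ : ℝ → ℝ) (hx₁ : ∀ t ∈ Ioc (0:ℝ) 1, x₁ t = Real.exp (k * ∫ s in Ioc t 1, p s))
    (f : ℝ → ℝ) (hf : IntegrableOn f (Ioc 0 1)) :
    Tendsto x₁ (𝓝[>] (0:ℝ)) (𝓝 0) ∧
    (∫ t in Ioc (0:ℝ) 1, |k| * p t * x₁ t * ∫ s in Ioc t 1, |f s| / x₁ s)
      = ∫ s in Ioc (0:ℝ) 1, |f s| := by
  have hX0 := tendsto_homogeneousSolution_nhdsGT_zero hk hp_div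
  have hx₁X : EqOn x₁ (homogeneousSolution p k) (Ioc 0 1) := hx₁
  refine ⟨hX0.congr' ?_, ?_⟩
  · filter_upwards [Ioo_mem_nhdsGT zero_lt_one] with t ht using (hx₁X ⟨ht.1, ht.2.le⟩).symm
  rw [← integral_mul_integral_div_homogeneousSolution hk.le (fun t ht ↦ (hp_pos t ht).le) hp_int
    hX0 hf]
  refine setIntegral_congr_fun measurableSet_Ioc fun t ht ↦ ?_
  have hinner : ∫ s in Ioc t 1, |f s| / x₁ s
      = ∫ s in Ioc t 1, |f s| / homogeneousSolution p k s :=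
    setIntegral_congr_fun measurableSet_Ioc fun s hs ↦ by rw [hx₁X ⟨ht.1.trans hs.1, hs.2⟩]
  rw [hinner, hx₁X ht, abs_of_neg hk]
end
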